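/- arXiv:math/0311238 — 11 statements merged into one kernel-verified Lean document; each statement's English description precedes it below -/
import Mathlib

section
/- Define f : ℂ → ℂ by f(z) = z²/conj(z) for z ≠ 0 and f(0) = 0. Then f is continuous on ℂ and f extends holomorphically from every circle bΔ(a,ρ) with |a| < ρ (every circle surrounding the origin), yet f is not holomorphic on ℂ (there is a point of ℂ at which f is not complex differentiable). -/
/-!
Away from the origin `z ^ 2 / conj z` is continuous, and it tends to `0` at the origin since its
modulus is `|z|`. On a circle `|z - a| = ρ` one has `conj z = conj a + ρ ^ 2 / (z - a)`, so there
`z ^ 2 / conj z = z ^ 2 (z - a) / (conj a (z - a) + ρ ^ 2)`; when `|a| < ρ` the denominator has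
modulus at least `ρ ^ 2 - |a| ρ > 0` on the closed disc, which gives the holomorphic extension.
Finally, if `f` were complex differentiable at some `z ≠ 0`, then so would be `conj = z ^ 2 / f`,
which it is not.
-/

open Complex Metric ComplexConjugate

/-- A function `f` extends holomorphically from the circle `bΔ(a,ρ)`. -/
def ExtHol (f : ℂ → ℂ) (a : ℂ) (ρ : ℝ) : Prop :=
  ∃ g : ℂ → ℂ, ContinuousOn g (closedBall a ρ) ∧
    DifferentiableOn ℂ g (ball a ρ) ∧ ∀ z ∈ sphere a ρ, g z = f z

theorem Complex.not_differentiableAt_conj (z : ℂ) : ¬ DifferentiableAt ℂ (conj : ℂ → ℂ) z := by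
  intro h
  have hderiv : (fderiv ℂ conj z).restrictScalars ℝ = (conjCLE : ℂ →L[ℝ] ℂ) :=
    h.hasFDerivAt.restrictScalars ℝ |>.unique conjCLE.hasFDerivAt
  have hI := (fderiv ℂ conj z).map_smul I 1
  rw [← ContinuousLinearMap.coe_restrictScalars' (R := ℝ), hderiv] at hI
  simp only [ContinuousLinearEquiv.coe_coe, conjCLE_apply, smul_eq_mul, mul_one, conj_I,
    map_one] at hI
  norm_num [Complex.ext_iff] at hI

theorem norm_sq_div_conj (z : ℂ) : ‖z ^ 2 / conj z‖ = ‖z‖ := by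
  rcases eq_or_ne z 0 with rfl | hz
  · simp
  · rw [norm_div, norm_conj, norm_pow, sq, mul_div_cancel_right₀ _ (norm_ne_zero_iff.2 hz)]

theorem continuous_sq_div_conj : Continuous fun z : ℂ => z ^ 2 / conj z := by
  refine continuous_iff_continuousAt.2 fun z => ?_
  rcases eq_or_ne z 0 with rfl | hz
  · rw [ContinuousAt, map_zero, zero_pow two_ne_zero, zero_div, tendsto_zero_iff_norm_tendsto_zero]
    simp only [norm_sq_div_conj]
    exact tendsto_norm_zero
  · exact (continuous_pow 2).continuousAt.div continuous_conj.continuousAt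
      ((map_ne_zero conj).2 hz)

theorem conj_mul_sub_eq_of_mem_sphere {a z : ℂ} {ρ : ℝ} (hz : z ∈ sphere a ρ) :
    conj z * (z - a) = conj a * (z - a) + (ρ : ℂ) ^ 2 := by
  have : conj (z - a) * (z - a) = (ρ : ℂ) ^ 2 := by
    rw [conj_mul', ← dist_eq, mem_sphere.1 hz]
  rw [map_sub] at this
  linear_combination this

theorem conj_mul_sub_add_sq_ne_zero {a z : ℂ} {ρ : ℝ} (ha : ‖a‖ < ρ) (hz : z ∈ closedBall a ρ) :
    conj a * (z - a) + (ρ : ℂ) ^ 2 ≠ 0 := by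
  intro h
  rw [add_eq_zero_iff_eq_neg] at h
  have hρ : 0 < ρ := (norm_nonneg a).trans_lt ha
  have := congrArg norm h
  rw [norm_mul, norm_conj, norm_neg, norm_pow, norm_real, Real.norm_of_nonneg hρ.le,
    ← dist_eq] at this
  nlinarith [mul_le_mul_of_nonneg_left (mem_closedBall.1 hz) (norm_nonneg a)]

theorem extHol_sq_div_conj {a : ℂ} {ρ : ℝ} (ha : ‖a‖ < ρ) :
    ExtHol (fun z => z ^ 2 / conj z) a ρ := by
  have hg : DifferentiableOn ℂ (fun z => z ^ 2 * (z - a) / (conj a * (z - a) + (ρ : ℂ) ^ 2))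
      (closedBall a ρ) := fun z hz => by
    have := conj_mul_sub_add_sq_ne_zero ha hz
    fun_prop (disch := assumption)
  refine ⟨_, hg.continuousOn, hg.mono ball_subset_closedBall, fun z hz => ?_⟩
  have hza : z - a ≠ 0 := by
    rw [← norm_ne_zero_iff, ← dist_eq, mem_sphere.1 hz]
    exact ((norm_nonneg a).trans_lt ha).ne'
  rw [← conj_mul_sub_eq_of_mem_sphere hz, mul_comm (conj z), ← div_div,
    mul_div_cancel_right₀ _ hza]

theorem not_differentiableAt_sq_div_conj {z : ℂ} (hz : z ≠ 0) :
    ¬ DifferentiableAt ℂ (fun z => z ^ 2 / conj z) z := fun h => by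
  have hconj : (fun w : ℂ => w ^ 2 / (w ^ 2 / conj w)) = conj := by
    funext w
    rcases eq_or_ne w 0 with rfl | hw
    · simp
    · rw [div_div_cancel₀ (pow_ne_zero 2 hw)]
  -- `conj w = w ^ 2 / f w`, also at `w = 0` thanks to `0 / 0 = 0`
  refine not_differentiableAt_conj z ?_
  rw [← hconj]
  exact (differentiableAt_pow 2).div h (by simp [hz])

theorem stmt1 :
    Continuous (fun z : ℂ => if z = 0 then 0 else z ^ 2 / conj z) ∧
    (∀ (a : ℂ) (ρ : ℝ), 0 < ρ → ‖a‖ < ρ →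
      ExtHol (fun z : ℂ => if z = 0 then 0 else z ^ 2 / conj z) a ρ) ∧
    (∃ z : ℂ, ¬ DifferentiableAt ℂ (fun z : ℂ => if z = 0 then 0 else z ^ 2 / conj z) z) := by
  have hf : (fun z : ℂ => if z = 0 then 0 else z ^ 2 / conj z) = fun z => z ^ 2 / conj z := by
    funext z
    split_ifs with hz <;> simp [hz]
  rw [hf]
  exact ⟨continuous_sq_div_conj, fun a ρ _ ha => extHol_sq_div_conj ha,
    1, not_differentiableAt_sq_div_conj one_ne_zero⟩
end

section
/- Let z, w ∈ ℂ with w ≠ conj(z), let a ∈ ℂ and R > 0. Then (z,w) ∈ Λ_{a,R} if and only if there exists t > 0 such that a = z + t(z − conj(w)) and R = √(t(t+1)) · |z − conj(w)|. Moreover, if (z,w) ∈ Λ_{a,R}, then a = z + (1/2)·(√(1 + 4R²/|z − conj(w)|²) − 1)·(z − conj(w)). -/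
open Complex Metric ComplexConjugate

/-- The variety `Λ_{a,ρ} = {(z,w) : (z−a)(w−conj a) = ρ², 0 < |z−a| < ρ}`. -/
def Lam (a : ℂ) (ρ : ℝ) : Set (ℂ × ℂ) :=
  {p | (p.1 - a) * (p.2 - conj a) = (ρ : ℂ) ^ 2 ∧
        0 < ‖p.1 - a‖ ∧ ‖p.1 - a‖ < ρ}

/-! With `u = z - a` and `c = z - conj w` one has `w - conj a = conj (u - c)`, so membership
in `Λ_{a,R}` says `u · conj (u - c) = R²` with `0 < |u| < R`. Then `u · conj c = |u|² - R²` is a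
negative real number, which forces `u = -t c` with `t = (R² - |u|²) / |c|² > 0`; conversely
`u = -t c` gives `u · conj (u - c) = t (t + 1) |c|²`. The explicit formula for `t` is the
positive root of `t² + t = R² / |c|²`. -/

theorem mem_Lam_iff (z w a : ℂ) (R : ℝ) :
    (z, w) ∈ Lam a R ↔
      (z - a) * conj ((z - a) - (z - conj w)) = (R : ℂ) ^ 2 ∧ 0 < ‖z - a‖ ∧ ‖z - a‖ < R := by
  simp only [Lam, Set.mem_ofPred_eq, sub_sub_sub_cancel_left, map_sub, conj_conj]

theorem Complex.mul_conj_sub_eq_sq_iff {u c : ℂ} {R : ℝ} (hc : c ≠ 0) :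
    (u * conj (u - c) = (R : ℂ) ^ 2 ∧ 0 < ‖u‖ ∧ ‖u‖ < R) ↔
      ∃ t : ℝ, 0 < t ∧ u = -(t : ℂ) * c ∧ R = √(t * (t + 1)) * ‖c‖ := by
  have hc_pos : 0 < ‖c‖ := norm_pos_iff.2 hc
  constructor
  · rintro ⟨h, hu_pos, hu_lt⟩
    have h_real : u * conj c = (‖u‖ : ℂ) ^ 2 - (R : ℂ) ^ 2 := by
      rw [map_sub, mul_sub] at h
      linear_combination mul_conj' u - h
    set t := (R ^ 2 - ‖u‖ ^ 2) / ‖c‖ ^ 2 with ht_def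
    have ht : 0 < t := div_pos (by nlinarith) (by positivity)
    have hu : u = -(t : ℂ) * c := by
      have hc' : (‖c‖ : ℂ) ≠ 0 := ofReal_ne_zero.2 hc_pos.ne'
      rw [ht_def]
      push_cast
      field_simp
      linear_combination c * h_real - u * mul_conj' c
    have hu_norm : ‖u‖ = t * ‖c‖ := by
      rw [hu, norm_mul, norm_neg, norm_real, Real.norm_of_nonneg ht.le]
    have hR_sq : R ^ 2 = t * (t + 1) * ‖c‖ ^ 2 := by
      rw [ht_def] at hu_norm ⊢
      field_simp at hu_norm ⊢
      nlinarith [hu_norm]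
    refine ⟨t, ht, hu, ?_⟩
    rw [← Real.sqrt_sq (hu_pos.trans hu_lt).le, hR_sq, Real.sqrt_mul' _ (sq_nonneg _),
      Real.sqrt_sq (norm_nonneg _)]
  · rintro ⟨t, ht, rfl, rfl⟩
    have ht_sq : 0 ≤ t * (t + 1) := by positivity
    have hnorm : ‖-(t : ℂ) * c‖ = t * ‖c‖ := by
      rw [norm_mul, norm_neg, norm_real, Real.norm_of_nonneg ht.le]
    refine ⟨?_, by rw [hnorm]; positivity, ?_⟩
    · have hR_sq : ((√(t * (t + 1)) * ‖c‖ : ℝ) : ℂ) ^ 2 = ((t * (t + 1) * ‖c‖ ^ 2 : ℝ) : ℂ) := by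
        rw [← ofReal_pow, mul_pow, Real.sq_sqrt ht_sq]
      rw [hR_sq]
      push_cast
      simp only [map_sub, map_mul, map_neg, conj_ofReal]
      linear_combination (t * (t + 1) : ℂ) * mul_conj' c
    · rw [hnorm]
      exact mul_lt_mul_of_pos_right ((Real.lt_sqrt ht.le).2 (by nlinarith)) hc_pos

theorem Real.sqrt_one_add_four_mul_mul_add_one {t : ℝ} (ht : 0 ≤ t) :
    √(1 + 4 * (t * (t + 1))) = 2 * t + 1 := by
  rw [show 1 + 4 * (t * (t + 1)) = (2 * t + 1) ^ 2 by ring, Real.sqrt_sq (by positivity)]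

theorem stmt3_general (z w a : ℂ) (R : ℝ) (hzw : w ≠ conj z) :
    ((z, w) ∈ Lam a R ↔
      ∃ t : ℝ, 0 < t ∧ a = z + (t : ℂ) * (z - conj w) ∧
        R = Real.sqrt (t * (t + 1)) * ‖z - conj w‖) ∧
    ((z, w) ∈ Lam a R →
      a = z + ((1 / 2 : ℝ) : ℂ) *
        ((Real.sqrt (1 + 4 * R ^ 2 / (‖z - conj w‖) ^ 2) - 1 : ℝ) : ℂ) *
        (z - conj w)) := by
  have hc : z - conj w ≠ 0 := sub_ne_zero.2 fun h => hzw (by rw [h, conj_conj])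
  have hc_pos : 0 < ‖z - conj w‖ := norm_pos_iff.2 hc
  have hmem : (z, w) ∈ Lam a R ↔
      ∃ t : ℝ, 0 < t ∧ a = z + (t : ℂ) * (z - conj w) ∧
        R = Real.sqrt (t * (t + 1)) * ‖z - conj w‖ := by
    rw [mem_Lam_iff, mul_conj_sub_eq_sq_iff hc]
    refine exists_congr fun t => and_congr_right fun _ => and_congr_left fun _ => ?_
    constructor <;> intro h <;> linear_combination -h
  refine ⟨hmem, fun h => ?_⟩
  obtain ⟨t, ht, rfl, rfl⟩ := hmem.1 h
  have hcoef : (1 / 2 : ℝ) * (√(1 + 4 * (√(t * (t + 1)) * ‖z - conj w‖) ^ 2 /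
      ‖z - conj w‖ ^ 2) - 1) = t := by
    rw [mul_pow, Real.sq_sqrt (by positivity), mul_div_assoc, mul_div_cancel_right₀ _ (by positivity),
      Real.sqrt_one_add_four_mul_mul_add_one ht.le]
    ring
  rw [← ofReal_mul, hcoef]

theorem stmt3 (z w a : ℂ) (R : ℝ) (hR : 0 < R) (hzw : w ≠ conj z) :
    ((z, w) ∈ Lam a R ↔
      ∃ t : ℝ, 0 < t ∧ a = z + (t : ℂ) * (z - conj w) ∧
        R = Real.sqrt (t * (t + 1)) * ‖z - conj w‖) ∧
    ((z, w) ∈ Lam a R →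
      a = z + ((1 / 2 : ℝ) : ℂ) *
        ((Real.sqrt (1 + 4 * R ^ 2 / (‖z - conj w‖) ^ 2) - 1 : ℝ) : ℂ) *
        (z - conj w)) :=
  stmt3_general z w a R hzw
end

section
/- Let z ∈ ℂ, t > 0, φ ∈ ℝ, a ∈ ℂ and R > 0. Then (z + t·e^{iφ}, conj(z) − t·e^{−iφ}) ∈ Λ_{a,R} if and only if a = z + √(t² + R²)·e^{iφ}. -/
open Complex Metric ComplexConjugate

/-! The map `(z, w) ↦ (u z + b, conj u w + conj b)` with `‖u‖ = 1` preserves both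
`(z - a)(w - conj a)` and `‖z - a‖` (after moving `a` accordingly), which reduces the theorem to
`z = 0`, `e^{iφ} = 1`. There `(t - v)(-t - conj v) = ‖v‖² - t² + 2 i t Im v`, so the point
`(t, -t)` lies on `Λ_{v,R}` only for real `v = ±√(t² + R²)`, and `‖t - v‖ < R` selects the
positive root. -/

theorem mem_Lam_rotate_add_iff {u : ℂ} (hu : ‖u‖ = 1) (b z w a : ℂ) (ρ : ℝ) :
    (u * z + b, conj u * w + conj b) ∈ Lam a ρ ↔ (z, w) ∈ Lam (conj u * (a - b)) ρ := by
  have huu : u * conj u = 1 := by rw [mul_conj', hu]; norm_num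
  have h₁ : u * z + b - a = u * (z - conj u * (a - b)) := by linear_combination (a - b) * huu
  have h₂ : conj u * w + conj b - conj a = conj u * (w - conj (conj u * (a - b))) := by
    simp only [map_mul, map_sub, conj_conj]
    linear_combination (conj a - conj b) * huu
  simp only [Lam, Set.mem_ofPred_eq, h₁, h₂, norm_mul, hu, one_mul]
  rw [show u * (z - conj u * (a - b)) * (conj u * (w - conj (conj u * (a - b)))) =
      (u * conj u) * ((z - conj u * (a - b)) * (w - conj (conj u * (a - b)))) by ring,
    huu, one_mul]

theorem ofReal_neg_mem_Lam_iff {t R : ℝ} (ht : 0 < t) (hR : 0 < R) (v : ℂ) :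
    ((t : ℂ), -(t : ℂ)) ∈ Lam v R ↔ v = (Real.sqrt (t ^ 2 + R ^ 2) : ℂ) := by
  have hs : Real.sqrt (t ^ 2 + R ^ 2) ^ 2 = t ^ 2 + R ^ 2 := Real.sq_sqrt (by positivity)
  have hts : t < Real.sqrt (t ^ 2 + R ^ 2) := by
    nlinarith [Real.sqrt_nonneg (t ^ 2 + R ^ 2)]
  have hst : Real.sqrt (t ^ 2 + R ^ 2) < t + R := by
    nlinarith [Real.sqrt_nonneg (t ^ 2 + R ^ 2)]
  constructor
  · rintro ⟨hprod, -, hlt⟩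
    have hre := congrArg re hprod
    have him := congrArg im hprod
    simp only [sub_re, sub_im, neg_re, neg_im, ofReal_re, ofReal_im, conj_re, conj_im, mul_re,
      mul_im, sq] at hre him
    have hv_im : v.im = 0 := by
      have : 2 * t * v.im = 0 := by linarith
      simpa [ht.ne'] using this
    have hv : v = (v.re : ℂ) := ext rfl (by simpa using hv_im)
    have hv_sq : v.re ^ 2 = t ^ 2 + R ^ 2 := by rw [hv_im] at hre; nlinarith
    have hv_nonneg : 0 ≤ v.re := by
      rw [hv, ← ofReal_sub, norm_real, Real.norm_eq_abs] at hlt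
      by_contra! hneg
      nlinarith [le_abs_self (t - v.re)]
    rw [hv, ← hv_sq, Real.sqrt_sq hv_nonneg]
  · rintro rfl
    have hdist : ‖(t : ℂ) - (Real.sqrt (t ^ 2 + R ^ 2) : ℂ)‖ = Real.sqrt (t ^ 2 + R ^ 2) - t := by
      rw [← ofReal_sub, norm_real, Real.norm_eq_abs, abs_of_neg (by linarith), neg_sub]
    refine ⟨?_, by rw [hdist]; linarith, by rw [hdist]; linarith⟩
    simp only [conj_ofReal]
    have hs' : (Real.sqrt (t ^ 2 + R ^ 2) : ℂ) ^ 2 = (t : ℂ) ^ 2 + (R : ℂ) ^ 2 := by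
      exact_mod_cast hs
    linear_combination hs'

theorem stmt4 (z : ℂ) (t : ℝ) (ht : 0 < t) (φ : ℝ) (a : ℂ) (R : ℝ) (hR : 0 < R) :
    (z + (t : ℂ) * Complex.exp ((φ : ℂ) * Complex.I),
      conj z - (t : ℂ) * Complex.exp (-(φ : ℂ) * Complex.I)) ∈ Lam a R ↔
    a = z + (Real.sqrt (t ^ 2 + R ^ 2) : ℂ) * Complex.exp ((φ : ℂ) * Complex.I) := by
  set u := Complex.exp ((φ : ℂ) * Complex.I)
  set s := Real.sqrt (t ^ 2 + R ^ 2)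
  have hu : ‖u‖ = 1 := norm_exp_ofReal_mul_I φ
  have huu : u * conj u = 1 := by rw [mul_conj', hu]; norm_num
  have hconj : Complex.exp (-(φ : ℂ) * Complex.I) = conj u := by
    rw [← exp_conj]; simp
  have hpoint : (z + (t : ℂ) * u, conj z - (t : ℂ) * conj u) =
      (u * t + z, conj u * -(t : ℂ) + conj z) := Prod.ext (by ring) (by ring)
  rw [hconj, hpoint, mem_Lam_rotate_add_iff hu, ofReal_neg_mem_Lam_iff ht hR]
  constructor
  · intro h
    linear_combination (z - a) * huu + u * h
  · rintro rfl
    linear_combination (s : ℂ) * huu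
end

section
/- Let a ∈ ℂ, 0 < r₁ < r₂ and γ = (r₁+r₂)/2. Then Ω(A(a,r₁,r₂)) is the disjoint union of the sets Λ_{b,γ} over those b ∈ ℂ for which bΔ(b,γ) is contained in the interior of A(a,r₁,r₂): every point of Ω(A(a,r₁,r₂)) belongs to Λ_{b,γ} for exactly one such b, and each such Λ_{b,γ} is contained in Ω(A(a,r₁,r₂)). -/
open Complex Metric ComplexConjugate

/-- The closed annulus `A(a,r₁,r₂) = {z : r₁ ≤ |z−a| ≤ r₂}`. -/
def Ann (a : ℂ) (r₁ r₂ : ℝ) : Set ℂ :=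
  {z | r₁ ≤ ‖z - a‖ ∧ ‖z - a‖ ≤ r₂}

/-- `Ω(A(a,r₁,r₂))`: the union of all `Λ_{b,ρ}` with `bΔ(b,ρ) ⊆ Int A(a,r₁,r₂)`
surrounding `a`. -/
def OmegaA (a : ℂ) (r₁ r₂ : ℝ) : Set (ℂ × ℂ) :=
  {p | ∃ (b : ℂ) (ρ : ℝ), 0 < ρ ∧ sphere b ρ ⊆ interior (Ann a r₁ r₂) ∧
        ‖b - a‖ < ρ ∧ p ∈ Lam b ρ}

/-!
For `p = (z, w)` put `v = w - conj z`. Since `(z - b)(w - conj b) = (z - b) v + |z - b|²`,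
`p ∈ Λ_{b,ρ}` says that `(z - b) v = ρ² - |z - b|² > 0`: so `z - b` points in the direction of
`|v| / v` and its length `t` is the positive root of `t² + |v| t = ρ²`. Hence the centre of the
unique `Λ_{b,ρ}` through `p` is a function of `p` and `ρ`, which is `1`-Lipschitz in `ρ`. Moving
from a circle of radius `ρ` inside the annulus to radius `γ` moves the centre by at most `|ρ - γ|`,
and this keeps the new circle inside the annulus.
-/

section Annulus

variable {a b : ℂ} {r₁ r₂ ρ : ℝ}

lemma interior_Ann (hr₁ : r₁ ≠ 0) :
    interior (Ann a r₁ r₂) = {z | r₁ < ‖z - a‖ ∧ ‖z - a‖ < r₂} := by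
  have hAnn : Ann a r₁ r₂ = (ball a r₁)ᶜ ∩ closedBall a r₂ := by
    ext z
    simp [Ann, dist_eq_norm]
  rw [hAnn, interior_inter, interior_compl, closure_ball a hr₁, interior_closedBall']
  ext z
  simp [dist_eq_norm]

lemma norm_ofReal_mul_exp_arg_mul_I (s : ℝ) (z : ℂ) : ‖(s : ℂ) * exp (z.arg * I)‖ = |s| := by
  rw [norm_mul, norm_exp_ofReal_mul_I, mul_one, norm_real, Real.norm_eq_abs]

lemma sphere_subset_interior_Ann_iff (hr₁ : r₁ ≠ 0) (hρ : 0 ≤ ρ) :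
    sphere b ρ ⊆ interior (Ann a r₁ r₂) ↔ r₁ < |ρ - ‖b - a‖| ∧ ‖b - a‖ + ρ < r₂ := by
  rw [interior_Ann hr₁]
  constructor
  · intro h
    set u := exp ((b - a).arg * I)
    have hba : b - a = ‖b - a‖ * u := (norm_mul_exp_arg_mul_I _).symm
    have hnear : b - ρ * u ∈ sphere b ρ := by
      simp [u, abs_of_nonneg hρ]
    have hfar : b + ρ * u ∈ sphere b ρ := by
      simp [u, abs_of_nonneg hρ]
    have hnear' : b - ρ * u - a = ((‖b - a‖ - ρ : ℝ) : ℂ) * u := by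
      push_cast; linear_combination hba
    have hfar' : b + ρ * u - a = ((‖b - a‖ + ρ : ℝ) : ℂ) * u := by
      push_cast; linear_combination hba
    have hr₁ := (h hnear).1
    have hr₂ := (h hfar).2
    rw [hnear', norm_ofReal_mul_exp_arg_mul_I, abs_sub_comm] at hr₁
    rw [hfar', norm_ofReal_mul_exp_arg_mul_I, abs_of_nonneg (by positivity)] at hr₂
    exact ⟨hr₁, hr₂⟩
  · rintro ⟨hr₁, hr₂⟩ z hz
    rw [mem_sphere_iff_norm] at hz
    have h₁ := norm_sub_le_norm_sub_add_norm_sub z b a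
    have h₂ := norm_sub_le_norm_sub_add_norm_sub z a b
    have h₃ := norm_sub_le_norm_sub_add_norm_sub b z a
    rw [norm_sub_rev a b] at h₂
    rw [norm_sub_rev b z] at h₃
    refine ⟨?_, by linarith⟩
    cases abs_cases (ρ - ‖b - a‖) <;> linarith

lemma sphere_subset_interior_Ann_iff_of_radius_eq_half_add (hr₁ : 0 < r₁) (hr₁₂ : r₁ < r₂) :
    sphere b ((r₁ + r₂) / 2) ⊆ interior (Ann a r₁ r₂) ↔ ‖b - a‖ < (r₂ - r₁) / 2 := by
  rw [sphere_subset_interior_Ann_iff hr₁.ne' (by linarith)]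
  constructor
  · rintro ⟨-, h⟩
    linarith
  · intro h
    rw [abs_of_pos (by linarith)]
    constructor <;> linarith

end Annulus

noncomputable def rootRadius (m ρ : ℝ) : ℝ := (√(m ^ 2 + 4 * ρ ^ 2) - m) / 2

section RootRadius

variable {m ρ t : ℝ}

lemma rootRadius_sq_add_mul (m ρ : ℝ) : rootRadius m ρ ^ 2 + m * rootRadius m ρ = ρ ^ 2 := by
  have := Real.sq_sqrt (by positivity : 0 ≤ m ^ 2 + 4 * ρ ^ 2)
  unfold rootRadius
  linear_combination this / 4

lemma rootRadius_pos (hρ : ρ ≠ 0) : 0 < rootRadius m ρ := by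
  have : |m| < √(m ^ 2 + 4 * ρ ^ 2) := by
    rw [← Real.sqrt_sq_eq_abs]
    exact Real.sqrt_lt_sqrt (sq_nonneg m) (lt_add_of_pos_right _ (by positivity))
  unfold rootRadius
  linarith [le_abs_self m]

lemma rootRadius_lt (hm : 0 < m) (hρ : 0 < ρ) : rootRadius m ρ < ρ := by
  have := rootRadius_sq_add_mul m ρ
  nlinarith [rootRadius_pos (m := m) hρ.ne']

lemma eq_rootRadius_of_sq_add_mul (hm : 0 ≤ m) (ht : 0 ≤ t) (h : t ^ 2 + m * t = ρ ^ 2) :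
    t = rootRadius m ρ := by
  have hsq : √(m ^ 2 + 4 * ρ ^ 2) = 2 * t + m := by
    rw [show m ^ 2 + 4 * ρ ^ 2 = (2 * t + m) ^ 2 by linear_combination -4 * h]
    exact Real.sqrt_sq (by positivity)
  unfold rootRadius
  linarith

lemma abs_rootRadius_sub_le (m ρ γ : ℝ) : |rootRadius m ρ - rootRadius m γ| ≤ |ρ - γ| := by
  -- `√(m² + 4 s²)` is the modulus of `m + 2 s i`, which is `1`-Lipschitz in `2 s`.
  have hnorm (s : ℝ) : √(m ^ 2 + 4 * s ^ 2) = ‖(m : ℂ) + (2 * s : ℝ) * I‖ := by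
    rw [norm_add_mul_I]; ring_nf
  calc |rootRadius m ρ - rootRadius m γ|
      = |‖(m : ℂ) + (2 * ρ : ℝ) * I‖ - ‖(m : ℂ) + (2 * γ : ℝ) * I‖| / 2 := by
        rw [← hnorm, ← hnorm, ← abs_two, ← abs_div, rootRadius, rootRadius]; ring_nf
    _ ≤ ‖(m : ℂ) + (2 * ρ : ℝ) * I - ((m : ℂ) + (2 * γ : ℝ) * I)‖ / 2 := by
        gcongr; exact abs_norm_sub_norm_le _ _
    _ = |ρ - γ| := by
        rw [show (m : ℂ) + (2 * ρ : ℝ) * I - ((m : ℂ) + (2 * γ : ℝ) * I) = (2 * (ρ - γ) : ℝ) * I by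
          push_cast; ring, norm_mul, norm_I, mul_one, norm_real, Real.norm_eq_abs, abs_mul, abs_two]
        ring

end RootRadius

noncomputable def lamCenter (p : ℂ × ℂ) (ρ : ℝ) : ℂ :=
  p.1 - rootRadius ‖p.2 - conj p.1‖ ρ * (‖p.2 - conj p.1‖ / (p.2 - conj p.1))

lemma norm_ofReal_norm_div_self_le_one (v : ℂ) : ‖(‖v‖ : ℂ) / v‖ ≤ 1 := by
  rw [norm_div, norm_real, norm_norm]
  exact div_self_le_one _

lemma sub_mul_sub_conj_eq (z w b : ℂ) :
    (z - b) * (w - conj b) = (z - b) * (w - conj z) + ‖z - b‖ ^ 2 := by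
  rw [← mul_conj', map_sub]
  ring

lemma mem_Lam_iff_s5 {p : ℂ × ℂ} {b : ℂ} {ρ : ℝ} :
    p ∈ Lam b ρ ↔ 0 < ρ ∧ p.2 ≠ conj p.1 ∧ b = lamCenter p ρ := by
  obtain ⟨z, w⟩ := p
  simp only [Lam, lamCenter, Set.mem_ofPred_eq, sub_mul_sub_conj_eq, ← sub_ne_zero (a := w)]
  set v := w - conj z
  constructor
  · rintro ⟨heq, hpos, hlt⟩
    set t := ‖z - b‖
    have huv : (z - b) * v = ((ρ ^ 2 - t ^ 2 : ℝ) : ℂ) := by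
      push_cast; linear_combination heq
    have hv : v ≠ 0 := by
      rintro hv
      rw [hv, mul_zero, eq_comm, ofReal_eq_zero] at huv
      nlinarith
    have htv : t * ‖v‖ = ρ ^ 2 - t ^ 2 := by
      rw [← norm_mul, huv, norm_real, Real.norm_eq_abs, abs_of_pos (by nlinarith)]
    have ht : t = rootRadius ‖v‖ ρ :=
      eq_rootRadius_of_sq_add_mul (norm_nonneg v) hpos.le (by linarith)
    refine ⟨hpos.trans hlt, hv, ?_⟩
    rw [← ht, mul_div_assoc', ← ofReal_mul, htv, ← huv]
    field_simp
    ring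
  · rintro ⟨hρ, hv, rfl⟩
    set t := rootRadius ‖v‖ ρ
    have hzb : z - (z - t * (‖v‖ / v)) = t * (‖v‖ / v) := by ring
    have hnorm : ‖z - (z - t * (‖v‖ / v))‖ = t := by
      rw [hzb, norm_mul, norm_div, norm_real, norm_real, norm_norm, div_self (norm_ne_zero_iff.2 hv),
        mul_one, Real.norm_of_nonneg (rootRadius_pos hρ.ne').le]
    rw [hnorm, hzb]
    refine ⟨?_, rootRadius_pos hρ.ne', rootRadius_lt (norm_pos_iff.2 hv) hρ⟩
    have := rootRadius_sq_add_mul ‖v‖ ρ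
    field_simp
    exact_mod_cast by linear_combination this

lemma norm_lamCenter_sub_lamCenter_le (p : ℂ × ℂ) (ρ γ : ℝ) :
    ‖lamCenter p ρ - lamCenter p γ‖ ≤ |ρ - γ| := by
  set v := p.2 - conj p.1
  have hdiff : lamCenter p ρ - lamCenter p γ =
      ((rootRadius ‖v‖ γ - rootRadius ‖v‖ ρ : ℝ) : ℂ) * (‖v‖ / v) := by
    simp only [lamCenter, v]; push_cast; ring
  rw [hdiff, norm_mul, norm_real, Real.norm_eq_abs, abs_sub_comm]
  calc |rootRadius ‖v‖ ρ - rootRadius ‖v‖ γ| * ‖(‖v‖ : ℂ) / v‖ ≤ |ρ - γ| * 1 :=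
        mul_le_mul (abs_rootRadius_sub_le _ _ _) (norm_ofReal_norm_div_self_le_one v)
          (norm_nonneg _) (abs_nonneg _)
    _ = |ρ - γ| := mul_one _

theorem stmt5 (a : ℂ) (r₁ r₂ : ℝ) (h1 : 0 < r₁) (h12 : r₁ < r₂) :
    (∀ p ∈ OmegaA a r₁ r₂,
      ∃! b : ℂ, sphere b ((r₁ + r₂) / 2) ⊆ interior (Ann a r₁ r₂) ∧
        p ∈ Lam b ((r₁ + r₂) / 2)) ∧
    (∀ b : ℂ, sphere b ((r₁ + r₂) / 2) ⊆ interior (Ann a r₁ r₂) →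
      Lam b ((r₁ + r₂) / 2) ⊆ OmegaA a r₁ r₂) := by
  set γ := (r₁ + r₂) / 2 with hγ_def
  have hγ : 0 < γ := by linarith
  constructor
  · rintro p ⟨b, ρ, hρ, hsph, hba, hp⟩
    obtain ⟨-, hv, rfl⟩ := mem_Lam_iff_s5.1 hp
    refine ⟨lamCenter p γ, ⟨?_, mem_Lam_iff_s5.2 ⟨hγ, hv, rfl⟩⟩,
      fun b' hb' => (mem_Lam_iff_s5.1 hb'.2).2.2⟩
    rw [sphere_subset_interior_Ann_iff_of_radius_eq_half_add h1 h12]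
    rw [sphere_subset_interior_Ann_iff h1.ne' hρ.le, abs_of_pos (sub_pos.2 hba)] at hsph
    obtain ⟨hρ₁, hρ₂⟩ := hsph
    have hcenter := norm_lamCenter_sub_lamCenter_le p γ ρ
    have htri := norm_sub_le_norm_sub_add_norm_sub (lamCenter p γ) (lamCenter p ρ) a
    cases abs_cases (γ - ρ) <;> linarith
  · intro b hsph p hp
    have hbγ := (sphere_subset_interior_Ann_iff_of_radius_eq_half_add h1 h12).1 hsph
    exact ⟨b, γ, hγ, hsph, by linarith, hp⟩
end

section
/- For all r₁, r₂ with 0 < r₁ < r₂ there exist δ > 0 and M > 0 such that {(z,w) ∈ ℂ² : |z| ≤ δ and |w| ≥ M} ⊆ Ω(A(0,r₁,r₂)). -/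
open Complex Metric ComplexConjugate

/- Writing `v = w - conj z`, the centre `b = z - t · conj v` puts `(z, w)` on `Λ_{b,ρ}` with
`ρ² = t(1+t)|v|²`; the choice `t = r² / (|v|² - r²)` makes `ρ = r(1+t)`. As `|w| → ∞` with `z`
small, `t|v| → 0`, so `b → 0` and `ρ → r`, and the circle `bΔ(b,ρ)` tends to the middle circle
`|ζ| = r` of the annulus. -/

lemma sphere_subset_interior_Ann {a b : ℂ} {ρ r₁ r₂ : ℝ} (h_in : r₁ + ‖b - a‖ < ρ)
    (h_out : ρ + ‖b - a‖ < r₂) : sphere b ρ ⊆ interior (Ann a r₁ r₂) := by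
  have h_open : IsOpen {ζ : ℂ | ‖ζ - a‖ ∈ Set.Ioo r₁ r₂} :=
    isOpen_Ioo.preimage (continuous_id.sub continuous_const).norm
  have h_sub : {ζ : ℂ | ‖ζ - a‖ ∈ Set.Ioo r₁ r₂} ⊆ Ann a r₁ r₂ :=
    fun ζ hζ => ⟨hζ.1.le, hζ.2.le⟩
  refine fun ζ hζ => interior_maximal h_sub h_open ?_
  rw [mem_sphere] at hζ
  rw [← dist_eq_norm] at h_in h_out
  rw [Set.mem_ofPred_eq, ← dist_eq_norm]
  have h_upper := dist_triangle ζ b a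
  have h_lower := dist_triangle ζ a b
  rw [dist_comm a b] at h_lower
  exact ⟨by linarith, by linarith⟩

lemma mem_OmegaA_of_mem_Lam {a b : ℂ} {ρ r₁ r₂ : ℝ} {p : ℂ × ℂ} (hr₁ : 0 ≤ r₁)
    (h_in : r₁ + ‖b - a‖ < ρ) (h_out : ρ + ‖b - a‖ < r₂) (hp : p ∈ Lam b ρ) :
    p ∈ OmegaA a r₁ r₂ :=
  ⟨b, ρ, by linarith [norm_nonneg (b - a)], sphere_subset_interior_Ann h_in h_out,
    by linarith, hp⟩

lemma mem_Lam_sub_mul_conj {z w : ℂ} {t ρ : ℝ} (ht : 0 < t) (hρ : 0 < ρ) (hzw : w ≠ conj z)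
    (hρ_sq : ρ ^ 2 = t * (1 + t) * ‖w - conj z‖ ^ 2) :
    (z, w) ∈ Lam (z - t * conj (w - conj z)) ρ := by
  set v := w - conj z
  have hv : 0 < ‖v‖ := norm_pos_iff.mpr (sub_ne_zero.mpr hzw)
  have h_norm : ‖z - (z - t * conj v)‖ = t * ‖v‖ := by
    rw [sub_sub_cancel, norm_mul, Complex.norm_conj, norm_real, Real.norm_of_nonneg ht.le]
  refine ⟨?_, by rw [h_norm]; positivity, ?_⟩
  · have h_snd : w - conj (z - t * conj v) = (1 + t) * v := by
      simp only [map_sub, map_mul, conj_conj, conj_ofReal, v]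
      ring
    rw [sub_sub_cancel, h_snd, mul_mul_mul_comm, conj_mul']
    exact_mod_cast hρ_sq.symm
  · rw [h_norm]
    nlinarith [mul_pos ht hv]

lemma exists_pos_mul_sq_sub_sq_eq {r e S : ℝ} (hr : 0 < r) (he : 0 < e)
    (hS : r + 2 * r ^ 2 / e ≤ S) :
    ∃ t : ℝ, 0 < t ∧ t * (S ^ 2 - r ^ 2) = r ^ 2 ∧ t * (S + r) ≤ e / 2 := by
  have hSr : 2 * r ^ 2 ≤ (S - r) * e := by rw [← div_le_iff₀ he]; linarith
  have hSr_pos : 0 < S - r := by nlinarith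
  have hS_pos : 0 < S + r := by linarith
  refine ⟨r ^ 2 / ((S - r) * (S + r)), by positivity, ?_, ?_⟩
  · rw [div_mul_eq_mul_div, div_eq_iff (by positivity)]
    ring
  · rw [div_mul_eq_mul_div, mul_div_mul_right _ _ hS_pos.ne', div_le_iff₀ hSr_pos]
    linarith

theorem stmt8 (r₁ r₂ : ℝ) (h1 : 0 < r₁) (h12 : r₁ < r₂) :
    ∃ (δ M : ℝ), 0 < δ ∧ 0 < M ∧
      ∀ z w : ℂ, ‖z‖ ≤ δ → M ≤ ‖w‖ →
        (z, w) ∈ OmegaA 0 r₁ r₂ := by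
  obtain ⟨r, e, hr, he, rfl, rfl⟩ : ∃ r e : ℝ, 0 < r ∧ 0 < e ∧ r₁ = r - e ∧ r₂ = r + e :=
    ⟨(r₁ + r₂) / 2, (r₂ - r₁) / 2, by linarith, by linarith, by ring, by ring⟩
  refine ⟨e / 4, e / 4 + r + 2 * r ^ 2 / e, by positivity, by positivity, fun z w hz hw => ?_⟩
  have hS : r + 2 * r ^ 2 / e ≤ ‖w - conj z‖ := by
    linarith [norm_sub_norm_le w (conj z), Complex.norm_conj z]
  obtain ⟨t, ht, ht_eq, ht_le⟩ := exists_pos_mul_sq_sub_sq_eq hr he hS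
  have hb : ‖z - t * conj (w - conj z) - 0‖ ≤ e / 4 + t * ‖w - conj z‖ := by
    rw [sub_zero]
    refine (norm_sub_le _ _).trans (add_le_add hz (le_of_eq ?_))
    rw [norm_mul, Complex.norm_conj, norm_real, Real.norm_of_nonneg ht.le]
  have hρ_sq : (r * (1 + t)) ^ 2 = t * (1 + t) * ‖w - conj z‖ ^ 2 := by
    linear_combination -(1 + t) * ht_eq
  refine mem_OmegaA_of_mem_Lam h1.le ?_ ?_ (mem_Lam_sub_mul_conj ht (by positivity) ?_ hρ_sq)
  · linarith [mul_pos hr ht]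
  · linarith [mul_pos hr ht]
  · rw [← sub_ne_zero, ← norm_pos_iff]
    linarith [show 0 ≤ 2 * r ^ 2 / e by positivity]
end

section
/- The union of the sets Λ_{a,ρ} over all a ∈ ℂ and ρ > 0 with |a| < ρ equals {(z,w) ∈ ℂ² : |w| > |z|}. That is, for (z,w) ∈ ℂ², there exist a ∈ ℂ and ρ > 0 with |a| < ρ and (z,w) ∈ Λ_{a,ρ} if and only if |w| > |z|. -/
/-!
`(z, w) ∈ Lam a ρ` says that `conj w` is the inverse of `z` in the circle `|ζ - a| = ρ`, with `z`
strictly inside it. With `u = z - a`, the defining equation gives the identity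
`|u|² (|w|² - |z|²) = (ρ² - |u|²) (ρ² - |a|² + |z|²)`, whose right side is positive when the circle
surrounds the origin; hence `|z| < |w|`. Conversely, for `v = conj w ≠ z` and `0 < s < 1`, the points
`z` and `v` are inverse in the circle centred at `a = (z - s² v) / (1 - s²)` of radius
`ρ = s |v - z| / (1 - s²)`, and `|a| < ρ` amounts to `|z| < s |v|`.
-/

open Complex Metric ComplexConjugate

lemma mul_norm_sub_sq_sub_norm_sub_smul_sq {E : Type*} [NormedAddCommGroup E]
    [InnerProductSpace ℝ E] (z v : E) (t : ℝ) :
    t * ‖v - z‖ ^ 2 - ‖z - t • v‖ ^ 2 = (1 - t) * (t * ‖v‖ ^ 2 - ‖z‖ ^ 2) := by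
  rw [norm_sub_sq_real, norm_sub_sq_real, norm_smul, real_inner_smul_right, real_inner_comm,
    Real.norm_eq_abs, mul_pow, sq_abs]
  ring

lemma norm_sub_sq_mul_eq_of_mul_eq {z w a : ℂ} {r : ℝ} (h : (z - a) * (w - conj a) = r) :
    ‖z - a‖ ^ 2 * (‖w‖ ^ 2 - ‖z‖ ^ 2) = (r - ‖z - a‖ ^ 2) * (r - ‖a‖ ^ 2 + ‖z‖ ^ 2) := by
  have h' : (conj z - conj a) * (conj w - a) = r := by
    simpa using congrArg conj h
  apply ofReal_injective
  push_cast
  simp only [← mul_conj', map_sub]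
  linear_combination ((conj z - conj a) * conj w) * h + (r + (z - a) * conj a) * h'

lemma norm_lt_norm_of_mem_Lam {a z w : ℂ} {ρ : ℝ} (ha : ‖a‖ < ρ) (h : (z, w) ∈ Lam a ρ) :
    ‖z‖ < ‖w‖ := by
  obtain ⟨hmul, hpos, hlt⟩ := h
  have key := norm_sub_sq_mul_eq_of_mul_eq (r := ρ ^ 2) (by push_cast; exact hmul)
  have hlt_sq := pow_lt_pow_left₀ hlt hpos.le two_ne_zero
  have ha_sq := pow_lt_pow_left₀ ha (norm_nonneg a) two_ne_zero
  have hprod : 0 < ‖z - a‖ ^ 2 * (‖w‖ ^ 2 - ‖z‖ ^ 2) := by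
    rw [key]
    apply mul_pos <;> nlinarith [sq_nonneg ‖z‖]
  have hsq : ‖z‖ ^ 2 < ‖w‖ ^ 2 := by
    linarith [pos_of_mul_pos_right hprod (by positivity)]
  exact (pow_lt_pow_iff_left₀ (norm_nonneg z) (norm_nonneg w) two_ne_zero).mp hsq

lemma exists_mem_Lam_of_norm_lt_mul {z v : ℂ} {s : ℝ} (hzv : z ≠ v) (hs0 : 0 < s) (hs1 : s < 1)
    (hz : ‖z‖ < s * ‖v‖) : ∃ a ρ, 0 < ρ ∧ ‖a‖ < ρ ∧ (z, conj v) ∈ Lam a ρ := by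
  set c : ℝ := 1 - s ^ 2
  have hc : 0 < c := by nlinarith
  have hc_ne : (c : ℂ) ≠ 0 := ofReal_ne_zero.mpr hc.ne'
  have hc_def : (c : ℂ) = 1 - (s : ℂ) ^ 2 := by push_cast [c]; rfl
  have hvz : 0 < ‖v - z‖ := norm_pos_iff.mpr (sub_ne_zero.mpr hzv.symm)
  set a : ℂ := c⁻¹ • (z - s ^ 2 • v)
  have hza : z - a = (s ^ 2 / c) • (v - z) := by
    simp only [a, real_smul, ofReal_div, ofReal_inv, ofReal_pow]
    field_simp
    rw [hc_def]
    ring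
  have hva : v - a = c⁻¹ • (v - z) := by
    rw [show v - a = (v - z) + (z - a) by ring, hza]
    simp only [real_smul, ofReal_div, ofReal_inv, ofReal_pow]
    field_simp
    rw [hc_def]
    ring
  have hnorm_za : ‖z - a‖ = s ^ 2 / c * ‖v - z‖ := by
    rw [hza, norm_smul, Real.norm_of_nonneg (by positivity)]
  refine ⟨a, s * ‖v - z‖ / c, by positivity, ?_, ?_, ?_, ?_⟩
  · have key := mul_norm_sub_sq_sub_norm_sub_smul_sq z v (s ^ 2)
    have hsq : ‖z - s ^ 2 • v‖ ^ 2 < (s * ‖v - z‖) ^ 2 := by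
      have := pow_lt_pow_left₀ hz (norm_nonneg z) two_ne_zero
      nlinarith
    have := lt_of_pow_lt_pow_left₀ 2 (by positivity) hsq
    rw [norm_smul, Real.norm_of_nonneg (inv_nonneg.mpr hc.le), inv_mul_eq_div]
    gcongr
  · show (z - a) * (conj v - conj a) = _
    rw [← map_sub, hza, hva, real_smul, real_smul, map_mul, conj_ofReal, mul_mul_mul_comm,
      mul_conj']
    push_cast
    field_simp
  · rw [hnorm_za]
    positivity
  · rw [hnorm_za, div_mul_eq_mul_div]
    gcongr
    nlinarith

theorem stmt9 (z w : ℂ) :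
    (∃ (a : ℂ) (ρ : ℝ), 0 < ρ ∧ ‖a‖ < ρ ∧ (z, w) ∈ Lam a ρ) ↔
    ‖z‖ < ‖w‖ := by
  refine ⟨fun ⟨a, ρ, _, ha, h⟩ ↦ norm_lt_norm_of_mem_Lam ha h, fun h ↦ ?_⟩
  have hw : 0 < ‖w‖ := (norm_nonneg z).trans_lt h
  have hzw : z ≠ conj w := ne_of_apply_ne norm (by rw [norm_conj]; exact h.ne)
  set s := (‖z‖ + ‖w‖) / (2 * ‖w‖)
  have hs0 : 0 < s := by positivity
  have hs1 : s < 1 := (div_lt_one (by positivity)).mpr (by linarith)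
  have hsw : s * ‖conj w‖ = (‖z‖ + ‖w‖) / 2 := by
    rw [norm_conj, div_mul_eq_mul_div, mul_div_mul_right _ _ hw.ne']
  simpa using exists_mem_Lam_of_norm_lt_mul hzw hs0 hs1 (by rw [hsw]; linarith)
end

section
/- Let a ∈ ℂ and ρ > 0 with |a| > ρ, and let z ∈ ℂ, z ≠ a. Then |conj(a) + ρ²/(z−a)| = |z| if and only if |z−a| = ρ or |z| = √(|a|²−ρ²). Equivalently, the intersection of the variety V_{a,ρ} = {(z,w) ∈ ℂ² : (z−a)(w−conj(a)) = ρ²} with the set {(z,w) : |z| = |w|} projects onto the union of the two circles bΔ(a,ρ) and bΔ(0,√(|a|²−ρ²)). -/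
/-!
Multiplying by `z - a`, the equation `|ā + ρ²/(z - a)| = |z|` becomes
`|ā(z - a) + ρ²|² = |z|² |z - a|²`, and the difference of the two sides factors as
`-(|z - a|² - ρ²)(|z|² - (|a|² - ρ²))`.
-/

open Complex Metric ComplexConjugate

lemma normSq_conj_mul_sub_add_sub_normSq_mul (a z : ℂ) (r : ℝ) :
    normSq (conj a * (z - a) + r) - normSq z * normSq (z - a) =
      -((normSq (z - a) - r) * (normSq z - (normSq a - r))) := by
  simp only [normSq_apply, add_re, add_im, mul_re, mul_im, sub_re, sub_im, conj_re, conj_im,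
    ofReal_re, ofReal_im]
  ring

lemma norm_conj_add_div_sub_eq_norm_iff {a z : ℂ} (hz : z ≠ a) (r : ℝ) :
    ‖conj a + r / (z - a)‖ = ‖z‖ ↔ ‖z - a‖ ^ 2 = r ∨ ‖z‖ ^ 2 = ‖a‖ ^ 2 - r := by
  have hza : z - a ≠ 0 := sub_ne_zero.mpr hz
  have hfrac : conj a + r / (z - a) = (conj a * (z - a) + r) / (z - a) := by
    field_simp
  rw [hfrac, norm_div, div_eq_iff (norm_ne_zero_iff.mpr hza),
    ← sq_eq_sq₀ (norm_nonneg _) (by positivity), mul_pow]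
  simp only [Complex.sq_norm]
  rw [← sub_eq_zero, normSq_conj_mul_sub_add_sub_normSq_mul, neg_eq_zero, mul_eq_zero,
    sub_eq_zero, sub_eq_zero]

theorem stmt12 (a : ℂ) (ρ : ℝ) (hρ : 0 < ρ) (ha : ρ < ‖a‖)
    (z : ℂ) (hz : z ≠ a) :
    ‖conj a + (ρ : ℂ) ^ 2 / (z - a)‖ = ‖z‖ ↔
    ‖z - a‖ = ρ ∨
      ‖z‖ = Real.sqrt ((‖a‖) ^ 2 - ρ ^ 2) := by
  have hcircle : ‖z - a‖ ^ 2 = ρ ^ 2 ↔ ‖z - a‖ = ρ := sq_eq_sq₀ (norm_nonneg _) hρ.le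
  have hsqrt : ‖z‖ ^ 2 = ‖a‖ ^ 2 - ρ ^ 2 ↔ ‖z‖ = Real.sqrt (‖a‖ ^ 2 - ρ ^ 2) := by
    rw [eq_comm, eq_comm (a := ‖z‖),
      Real.sqrt_eq_iff_eq_sq (by nlinarith [norm_nonneg a]) (norm_nonneg z)]
  rw [← hcircle, ← hsqrt, ← norm_conj_add_div_sub_eq_norm_iff hz, ofReal_pow]
end

section
/- Let a ∈ ℂ and ρ > 0 with |a| > ρ, and let z ∈ ℂ, z ≠ a. Then |conj(a) + ρ²/(z−a)| > |z| if and only if exactly one of the following holds: (i) |z| < √(|a|²−ρ²) and |z−a| > ρ, or (ii) |z−a| < ρ and |z| > √(|a|²−ρ²). Equivalently, the point (z, conj(a) + ρ²/(z−a)) lies in Ω = {(z,w) ∈ ℂ² : |w| > |z|} if and only if z lies in D₃(a,ρ) = {z : |z| < √(|a|²−ρ²)} \ {z : |z−a| ≤ ρ} or in D₄(a,ρ) = {z : |z−a| < ρ} \ {z : |z| ≤ √(|a|²−ρ²)}. -/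
/-!
Multiplying by `‖z - a‖` and squaring, the inequality `‖z‖ < ‖conj a + ρ² / (z - a)‖` becomes
`‖z‖² ‖z - a‖² < ‖conj a (z - a) + ρ²‖²`, and the difference of the two sides factors as
`(‖a‖² - ρ² - ‖z‖²) (‖z - a‖² - ρ²)`. So the inequality holds exactly when `z` is strictly inside
the circle `‖z‖ = √(‖a‖² - ρ²)` and strictly outside `‖z - a‖ = ρ`, or the other way round.
-/

open Complex ComplexConjugate

theorem normSq_conj_mul_sub_add_ofReal_sub_normSq_mul (a z : ℂ) (t : ℝ) :
    normSq (conj a * (z - a) + t) - normSq z * normSq (z - a) =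
      (normSq a - t - normSq z) * (normSq (z - a) - t) := by
  simp only [normSq_apply, mul_re, mul_im, sub_re, sub_im, add_re, add_im, conj_re, conj_im,
    ofReal_re, ofReal_im]
  ring

theorem norm_lt_norm_conj_add_div_sub_iff {a z : ℂ} (hz : z ≠ a) (t : ℝ) :
    ‖z‖ < ‖conj a + t / (z - a)‖ ↔ 0 < (‖a‖ ^ 2 - t - ‖z‖ ^ 2) * (‖z - a‖ ^ 2 - t) := by
  have hza : z - a ≠ 0 := sub_ne_zero.mpr hz
  have hmul : ‖conj a + t / (z - a)‖ * ‖z - a‖ = ‖conj a * (z - a) + t‖ := by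
    rw [← norm_mul, add_mul, div_mul_cancel₀ _ hza]
  rw [← mul_lt_mul_iff_left₀ (norm_pos_iff.mpr hza), hmul,
    ← sq_lt_sq₀ (by positivity) (by positivity), mul_pow, ← sub_pos]
  simp only [Complex.sq_norm, normSq_conj_mul_sub_add_ofReal_sub_normSq_mul]

theorem mul_sub_sq_sub_sq_pos_iff_xor {c s r ρ : ℝ} (hc : 0 ≤ c) (hs : 0 ≤ s) (hr : 0 ≤ r)
    (hρ : 0 ≤ ρ) :
    0 < (c - s ^ 2) * (r ^ 2 - ρ ^ 2) ↔ Xor (s < √c ∧ ρ < r) (r < ρ ∧ √c < s) := by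
  rw [mul_pos_iff, sub_pos, sub_pos, sub_neg, sub_neg, sq_lt_sq₀ hρ hr, sq_lt_sq₀ hr hρ,
    ← Real.lt_sqrt hs, ← Real.sqrt_lt hc hs, xor_iff_or_and_not_and]
  have hexcl : ¬((s < √c ∧ ρ < r) ∧ (r < ρ ∧ √c < s)) := fun h => lt_asymm h.1.2 h.2.1
  tauto

theorem stmt13 (a : ℂ) (ρ : ℝ) (hρ : 0 < ρ) (ha : ρ < ‖a‖)
    (z : ℂ) (hz : z ≠ a) :
    ‖z‖ < ‖conj a + (ρ : ℂ) ^ 2 / (z - a)‖ ↔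
    Xor' (‖z‖ < Real.sqrt ((‖a‖) ^ 2 - ρ ^ 2) ∧
            ρ < ‖z - a‖)
         (‖z - a‖ < ρ ∧
            Real.sqrt ((‖a‖) ^ 2 - ρ ^ 2) < ‖z‖) := by
  have hc : 0 ≤ ‖a‖ ^ 2 - ρ ^ 2 := sub_nonneg.mpr (pow_le_pow_left₀ hρ.le ha.le 2)
  rw [← ofReal_pow, norm_lt_norm_conj_add_div_sub_iff hz]
  exact mul_sub_sq_sub_sq_pos_iff_xor hc (norm_nonneg z) (norm_nonneg _) hρ.le
end

section
/- Let g : ℂ → ℂ be a function from the disc algebra (continuous on the closed unit disc {ζ : |ζ| ≤ 1} and holomorphic on the open unit disc {ζ : |ζ| < 1}). Define f : ℂ \ {0} → ℂ by f(z) = g(z/conj(z)). Then f is continuous on ℂ \ {0} and f extends holomorphically from every circle bΔ(a,ρ) with |a| < ρ (every circle surrounding the origin). -/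
open Complex Metric ComplexConjugate

/-!
On the circle `|z - a| = ρ` we have `conj z = conj a + ρ² / (z - a)`, so there
`z / conj z = z (z - a) / (conj a (z - a) + ρ²)`. When `|a| < ρ` the right-hand side is a
rational function without poles on the closed disc `|z - a| ≤ ρ`, and
`|den|² - |num|² = (ρ² - |z - a|²) · (positive factor)`, so it maps the closed (open) disc into
the closed (open) unit disc; composing `g` with it gives the extension.
-/

theorem norm_div_conj_eq_one {z : ℂ} (hz : z ≠ 0) : ‖z / conj z‖ = 1 := by
  rw [norm_div, norm_conj, div_self (norm_ne_zero_iff.mpr hz)]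

theorem ExtHol.of_comp {g φ f : ℂ → ℂ} {a : ℂ} {ρ : ℝ}
    (hgc : ContinuousOn g (closedBall 0 1)) (hgd : DifferentiableOn ℂ g (ball 0 1))
    (hφc : ContinuousOn φ (closedBall a ρ)) (hφd : DifferentiableOn ℂ φ (ball a ρ))
    (hφ_closedBall : Set.MapsTo φ (closedBall a ρ) (closedBall 0 1))
    (hφ_ball : Set.MapsTo φ (ball a ρ) (ball 0 1))
    (hφf : ∀ z ∈ sphere a ρ, g (φ z) = f z) :
    ExtHol f a ρ :=
  ⟨g ∘ φ, hgc.comp hφc hφ_closedBall, hgd.comp hφd hφ_ball, hφf⟩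

namespace CircleExtension

variable (a : ℂ) (ρ : ℝ)

def num (z : ℂ) : ℂ := z * (z - a)

def den (z : ℂ) : ℂ := conj a * (z - a) + (ρ : ℂ) ^ 2

theorem normSq_den_sub_normSq_num (z : ℂ) :
    normSq (den a ρ z) - normSq (num a z) =
      (ρ ^ 2 - normSq (z - a)) * (ρ ^ 2 + normSq (z - a) + 2 * (conj a * (z - a)).re) := by
  simp only [den, num, normSq_apply, add_re, add_im, mul_re, mul_im, sub_re, sub_im,
    conj_re, conj_im, ← ofReal_pow, ofReal_re, ofReal_im]
  ring

variable {a ρ}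

theorem sq_add_normSq_add_two_re_pos (ha : ‖a‖ < ρ) (z : ℂ) :
    0 < ρ ^ 2 + normSq (z - a) + 2 * (conj a * (z - a)).re := by
  have hre : -(‖a‖ * ‖z - a‖) ≤ (conj a * (z - a)).re := by
    have := neg_abs_le (conj a * (z - a)).re
    have := abs_re_le_norm (conj a * (z - a))
    rw [norm_mul, norm_conj] at this
    linarith
  rw [normSq_eq_norm_sq]
  -- `ρ² + |w|² - 2|a||w| = (|w| - |a|)² + ρ² - |a|²`
  nlinarith [sq_nonneg (‖z - a‖ - ‖a‖), norm_nonneg a]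

theorem den_ne_zero (ha : ‖a‖ < ρ) {z : ℂ} (hz : z ∈ closedBall a ρ) : den a ρ z ≠ 0 := by
  intro h
  have hnorm : ‖a‖ * ‖z - a‖ = ρ ^ 2 := by
    have := congrArg norm (eq_neg_of_add_eq_zero_left h)
    rwa [norm_mul, norm_conj, norm_neg, norm_pow, norm_real, Real.norm_eq_abs, sq_abs] at this
  have hza : ‖z - a‖ ≤ ρ := by rwa [mem_closedBall, dist_eq] at hz
  nlinarith [norm_nonneg a, norm_nonneg (z - a)]

noncomputable def discMap (a : ℂ) (ρ : ℝ) (z : ℂ) : ℂ := num a z / den a ρ z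

theorem differentiableOn_discMap (ha : ‖a‖ < ρ) :
    DifferentiableOn ℂ (discMap a ρ) (closedBall a ρ) :=
  DifferentiableOn.div (by unfold num; fun_prop) (by unfold den; fun_prop)
    fun _ hz => den_ne_zero ha hz

theorem norm_discMap_le_one (ha : ‖a‖ < ρ) {z : ℂ} (hz : z ∈ closedBall a ρ) :
    ‖discMap a ρ z‖ ≤ 1 := by
  have hza : normSq (z - a) ≤ ρ ^ 2 := by
    rw [mem_closedBall, dist_eq] at hz
    rw [normSq_eq_norm_sq]
    exact pow_le_pow_left₀ (norm_nonneg _) hz 2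
  have hsq : normSq (num a z) ≤ normSq (den a ρ z) := by
    have := mul_nonneg (sub_nonneg.mpr hza) (sq_add_normSq_add_two_re_pos ha z).le
    linarith [normSq_den_sub_normSq_num a ρ z]
  rw [discMap, norm_div, div_le_one (norm_pos_iff.mpr (den_ne_zero ha hz))]
  simpa only [norm_def] using Real.sqrt_le_sqrt hsq

theorem norm_discMap_lt_one (ha : ‖a‖ < ρ) {z : ℂ} (hz : z ∈ ball a ρ) :
    ‖discMap a ρ z‖ < 1 := by
  have hza : normSq (z - a) < ρ ^ 2 := by
    rw [mem_ball, dist_eq] at hz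
    rw [normSq_eq_norm_sq]
    exact pow_lt_pow_left₀ hz (norm_nonneg _) two_ne_zero
  have hsq : normSq (num a z) < normSq (den a ρ z) := by
    have := mul_pos (sub_pos.mpr hza) (sq_add_normSq_add_two_re_pos ha z)
    linarith [normSq_den_sub_normSq_num a ρ z]
  have hden := den_ne_zero ha (ball_subset_closedBall hz)
  rw [discMap, norm_div, div_lt_one (norm_pos_iff.mpr hden)]
  simpa only [norm_def] using Real.sqrt_lt_sqrt (normSq_nonneg _) hsq

theorem discMap_eq_div_conj (ha : ‖a‖ < ρ) {z : ℂ} (hz : z ∈ sphere a ρ) :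
    discMap a ρ z = z / conj z := by
  rw [mem_sphere, dist_eq] at hz
  have hza : z - a ≠ 0 := by
    rintro h
    rw [h, norm_zero] at hz
    exact (norm_nonneg a).not_gt (hz ▸ ha)
  have hden : den a ρ z = conj z * (z - a) := by
    have hρ : (ρ : ℂ) ^ 2 = conj (z - a) * (z - a) := by
      rw [mul_comm, mul_conj, normSq_eq_norm_sq, hz, ofReal_pow]
    rw [den, hρ, map_sub]
    ring
  rw [discMap, num, hden, mul_div_mul_right _ _ hza]

end CircleExtension

open CircleExtension in
theorem stmt15 (g : ℂ → ℂ) (hgc : ContinuousOn g (closedBall 0 1))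
    (hgd : DifferentiableOn ℂ g (ball 0 1)) :
    ContinuousOn (fun z : ℂ => g (z / conj z)) {(0 : ℂ)}ᶜ ∧
    ∀ (a : ℂ) (ρ : ℝ), 0 < ρ → ‖a‖ < ρ →
      ExtHol (fun z : ℂ => g (z / conj z)) a ρ := by
  refine ⟨?_, fun a ρ _ ha => ?_⟩
  · refine hgc.comp (continuousOn_id.div continuous_conj.continuousOn fun z hz => ?_)
      fun z hz => ?_
    · exact (map_ne_zero _).mpr hz
    · rw [mem_closedBall, dist_zero_right, norm_div_conj_eq_one hz]
  · have hφ := differentiableOn_discMap ha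
    exact ExtHol.of_comp hgc hgd hφ.continuousOn (hφ.mono ball_subset_closedBall)
      (fun z hz => mem_closedBall_zero_iff.mpr (norm_discMap_le_one ha hz))
      (fun z hz => mem_ball_zero_iff.mpr (norm_discMap_lt_one ha hz))
      (fun z hz => by rw [discMap_eq_div_conj ha hz])
end

section
/- Let f : ℂ \ {0} → ℂ be continuous and constant on each line through the origin, i.e. f(tz) = f(z) for all z ≠ 0 and all real t ≠ 0. Then the following are equivalent: (i) there exist a ∈ ℂ and ρ > 0 with |a| < ρ such that f extends holomorphically from bΔ(a,ρ); (ii) f extends holomorphically from every circle bΔ(a,ρ) with |a| < ρ; (iii) there exists a function g from the disc algebra such that f(z) = g(z/conj(z)) for all z ≠ 0. -/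
open Complex Metric ComplexConjugate

open Filter Topology

/-!
For a circle `|z - a| = ρ` around the origin, the map
`φ z = z (z - a) / (conj a * z + ρ² - |a|²)` sends the closed (open) disc into the closed
(open) unit disc, because
`|z (z - a)|² - |conj a * z + ρ² - |a|²|² = (|z|² + ρ² - |a|²)(|z - a|² - ρ²)`,
and it equals `z / conj z` on the circle. Hence `g ∘ φ` extends `f = g (z / conj z)`.

Conversely, let `G` extend `f`. Each `w` with `|w| ≤ 1` has two preimages `z₁, z₂` under `φ`,
the roots of `z (z - a) = w (conj a * z + ρ² - |a|²)`, and `g w = (G z₁ + G z₂) / 2` lies in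
the disc algebra: it is continuous since the unordered pair of roots depends continuously on
`w`, and holomorphic off the finitely many zeros of the discriminant, which are removable.
When `|w| = 1` both roots lie on the circle and satisfy `zᵢ / conj zᵢ = w`, so they lie on the
line through any `z` with `z / conj z = w`, whence `g w = f z`.
-/

noncomputable def circleDen (a : ℂ) (ρ : ℝ) (z : ℂ) : ℂ :=
  conj a * z + (ρ ^ 2 - ‖a‖ ^ 2 : ℂ)

theorem norm_mul_sub_sq_sub_norm_circleDen_sq (a z : ℂ) (ρ : ℝ) :
    ‖z * (z - a)‖ ^ 2 - ‖circleDen a ρ z‖ ^ 2 =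
      (‖z‖ ^ 2 + ρ ^ 2 - ‖a‖ ^ 2) * (‖z - a‖ ^ 2 - ρ ^ 2) := by
  apply Complex.ofReal_injective
  push_cast
  simp only [← mul_conj', circleDen, map_mul, map_sub, map_add, map_pow, conj_conj,
    conj_ofReal]
  ring

section Circle

variable {a z : ℂ} {ρ : ℝ}

theorem norm_mul_sub_le_norm_circleDen_iff (ha : ‖a‖ < ρ) :
    ‖z * (z - a)‖ ≤ ‖circleDen a ρ z‖ ↔ z ∈ closedBall a ρ := by
  have key := norm_mul_sub_sq_sub_norm_circleDen_sq a z ρ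
  have hpos : 0 < ‖z‖ ^ 2 + ρ ^ 2 - ‖a‖ ^ 2 := by nlinarith [norm_nonneg a, norm_nonneg z]
  rw [mem_closedBall_iff_norm, ← sq_le_sq₀ (norm_nonneg _) (norm_nonneg _),
    ← sq_le_sq₀ (norm_nonneg _) ((norm_nonneg a).trans ha.le)]
  constructor <;> intro h <;> nlinarith

theorem norm_mul_sub_lt_norm_circleDen_iff (ha : ‖a‖ < ρ) :
    ‖z * (z - a)‖ < ‖circleDen a ρ z‖ ↔ z ∈ ball a ρ := by
  have key := norm_mul_sub_sq_sub_norm_circleDen_sq a z ρ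
  have hpos : 0 < ‖z‖ ^ 2 + ρ ^ 2 - ‖a‖ ^ 2 := by nlinarith [norm_nonneg a, norm_nonneg z]
  rw [mem_ball_iff_norm, ← sq_lt_sq₀ (norm_nonneg _) (norm_nonneg _),
    ← sq_lt_sq₀ (norm_nonneg _) ((norm_nonneg a).trans ha.le)]
  constructor <;> intro h <;> nlinarith

theorem circleDen_ne_zero (ha : ‖a‖ < ρ) (hz : z ∈ closedBall a ρ) :
    circleDen a ρ z ≠ 0 := by
  intro h
  have hρ : ρ ≠ 0 := ((norm_nonneg a).trans_lt ha).ne'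
  have := (norm_mul_sub_le_norm_circleDen_iff ha).2 hz
  rw [h, norm_zero, norm_le_zero_iff, mul_eq_zero, sub_eq_zero] at this
  rcases this with rfl | rfl
  · have : ((ρ ^ 2 - ‖a‖ ^ 2 : ℝ) : ℂ) = 0 := by simpa [circleDen] using h
    nlinarith [norm_nonneg a, Complex.ofReal_eq_zero.1 this]
  · rw [circleDen, conj_mul'] at h
    simp [hρ] at h

theorem conj_mul_sub_eq_circleDen (hz : z ∈ sphere a ρ) :
    conj z * (z - a) = circleDen a ρ z := by
  have h : (z - a) * conj (z - a) = ρ ^ 2 := by rw [mul_conj', mem_sphere_iff_norm.1 hz]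
  rw [circleDen, ← conj_mul' a, map_sub] at *
  linear_combination h

theorem ne_zero_of_mem_sphere_of_norm_lt (ha : ‖a‖ < ρ) (hz : z ∈ sphere a ρ) :
    z ≠ 0 := by
  rintro rfl
  rw [mem_sphere_iff_norm, zero_sub, norm_neg] at hz
  exact ha.ne hz

noncomputable def circleBlaschke (a : ℂ) (ρ : ℝ) (z : ℂ) : ℂ :=
  z * (z - a) / circleDen a ρ z

theorem circleBlaschke_mem_closedBall (ha : ‖a‖ < ρ) (hz : z ∈ closedBall a ρ) :
    circleBlaschke a ρ z ∈ closedBall 0 1 := by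
  rw [mem_closedBall_zero_iff, circleBlaschke, norm_div,
    div_le_one (norm_pos_iff.2 (circleDen_ne_zero ha hz))]
  exact (norm_mul_sub_le_norm_circleDen_iff ha).2 hz

theorem circleBlaschke_mem_ball (ha : ‖a‖ < ρ) (hz : z ∈ ball a ρ) :
    circleBlaschke a ρ z ∈ ball 0 1 := by
  rw [mem_ball_zero_iff, circleBlaschke, norm_div,
    div_lt_one (norm_pos_iff.2 (circleDen_ne_zero ha (ball_subset_closedBall hz)))]
  exact (norm_mul_sub_lt_norm_circleDen_iff ha).2 hz

theorem circleBlaschke_eq_div_conj (hρ : ρ ≠ 0) (hz : z ∈ sphere a ρ) :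
    circleBlaschke a ρ z = z / conj z := by
  rw [circleBlaschke, ← conj_mul_sub_eq_circleDen hz,
    mul_div_mul_right _ _ (sub_ne_zero.2 (ne_of_mem_sphere hz hρ))]

theorem extHol_of_eq_comp_div_conj {f g : ℂ → ℂ} (hgc : ContinuousOn g (closedBall 0 1))
    (hgd : DifferentiableOn ℂ g (ball 0 1)) (hfg : ∀ z, z ≠ 0 → f z = g (z / conj z))
    (ha : ‖a‖ < ρ) : ExtHol f a ρ := by
  have hρ : ρ ≠ 0 := ((norm_nonneg a).trans_lt ha).ne'
  refine ⟨g ∘ circleBlaschke a ρ, hgc.comp ?_ fun z hz ↦ circleBlaschke_mem_closedBall ha hz,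
    hgd.comp ?_ fun z hz ↦ circleBlaschke_mem_ball ha hz, fun z hz ↦ ?_⟩
  · exact ContinuousOn.div (by fun_prop) (by unfold circleDen; fun_prop)
      fun z hz ↦ circleDen_ne_zero ha hz
  · exact DifferentiableOn.div (by fun_prop) (by unfold circleDen; fun_prop)
      fun z hz ↦ circleDen_ne_zero ha (ball_subset_closedBall hz)
  · rw [Function.comp_apply, circleBlaschke_eq_div_conj hρ hz,
      hfg z (ne_zero_of_mem_sphere_of_norm_lt ha hz)]

end Circle

theorem eq_of_div_conj_eq {f : ℂ → ℂ}
    (hline : ∀ z : ℂ, z ≠ 0 → ∀ t : ℝ, t ≠ 0 → f ((t : ℂ) * z) = f z)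
    {z z' : ℂ} (hz : z ≠ 0) (hz' : z' ≠ 0) (h : z / conj z = z' / conj z') : f z = f z' := by
  have hcz : conj z ≠ 0 := (map_ne_zero _).2 hz
  have hcz' : conj z' ≠ 0 := (map_ne_zero _).2 hz'
  have hreal : conj (z / z') = z / z' := by
    rw [div_eq_div_iff hcz hcz'] at h
    rw [map_div₀, div_eq_div_iff hcz' hz']
    linear_combination -h
  obtain ⟨t, ht⟩ := Complex.conj_eq_iff_real.1 hreal
  have ht0 : t ≠ 0 := by
    rintro rfl
    exact div_ne_zero hz hz' (by simpa using ht)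
  rw [← hline z' hz' t ht0, ← ht, div_mul_cancel₀ _ hz']

theorem finite_setOf_quadratic_eq_zero {R : Type*} [CommRing R] [IsDomain R] {α β γ : R}
    (h : α ≠ 0 ∨ β ≠ 0 ∨ γ ≠ 0) : {x : R | α * x ^ 2 + β * x + γ = 0}.Finite := by
  open Polynomial in
  have hp : C α * X ^ 2 + C β * X + C γ ≠ 0 := by
    intro hp
    have h2 := congrArg (coeff · 2) hp
    have h1 := congrArg (coeff · 1) hp
    have h0 := congrArg (coeff · 0) hp
    simp [coeff_X, coeff_C] at h2 h1 h0
    tauto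
  convert Polynomial.finite_setOfPred_isRoot hp using 2
  simp

section SymmetricFunctionsOfRoots

variable {X : Type*} {l : Filter X} {K : Set ℂ} {u v : X → ℂ} {y₁ y₂ : ℂ}

theorem eventually_near_of_tendsto_add_of_tendsto_mul (hK : Bornology.IsBounded K)
    (hu : ∀ᶠ x in l, u x ∈ K) (hsum : Tendsto (fun x ↦ u x + v x) l (𝓝 (y₁ + y₂)))
    (hprod : Tendsto (fun x ↦ u x * v x) l (𝓝 (y₁ * y₂))) {δ : ℝ} (hδ : 0 < δ) :
    ∀ᶠ x in l,
      ‖u x - y₁‖ < δ ∧ ‖v x - y₂‖ < δ ∨ ‖u x - y₂‖ < δ ∧ ‖v x - y₁‖ < δ := by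
  obtain ⟨C, hC⟩ := hK.exists_norm_le
  have hsum₀ : Tendsto (fun x ↦ u x + v x - (y₁ + y₂)) l (𝓝 0) := by
    simpa using hsum.sub_const (y₁ + y₂)
  -- `(u - y₁)(u - y₂) = u ((u + v) - (y₁ + y₂)) - (u v - y₁ y₂)`
  have hroot : Tendsto (fun x ↦ (u x - y₁) * (u x - y₂)) l (𝓝 0) := by
    have hbdd : IsBoundedUnder (· ≤ ·) l (norm ∘ u) :=
      ⟨C, by simpa using hu.mono fun x hx ↦ hC _ hx⟩
    have := (isBoundedUnder_le_mul_tendsto_zero hbdd hsum₀).sub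
      (by simpa using hprod.sub_const (y₁ * y₂))
    simp only [sub_zero] at this
    exact this.congr fun x ↦ by ring
  filter_upwards
    [hroot.norm.eventually (gt_mem_nhds (by rw [norm_zero]; exact pow_pos (half_pos hδ) 2)),
    hsum₀.norm.eventually (gt_mem_nhds (by rw [norm_zero]; exact half_pos hδ))] with x hr hs
  have hv₁ : v x - y₂ = (u x + v x - (y₁ + y₂)) - (u x - y₁) := by ring
  have hv₂ : v x - y₁ = (u x + v x - (y₁ + y₂)) - (u x - y₂) := by ring
  rw [hv₁, hv₂]
  by_cases h : ‖u x - y₁‖ < δ / 2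
  · exact .inl ⟨by linarith, (norm_sub_le _ _).trans_lt (by linarith)⟩
  · have : ‖u x - y₂‖ < δ / 2 := by
      by_contra h'
      rw [norm_mul] at hr
      nlinarith
    exact .inr ⟨by linarith, (norm_sub_le _ _).trans_lt (by linarith)⟩

theorem tendsto_comp_add_comp_of_tendsto_add_of_tendsto_mul (hK : Bornology.IsBounded K)
    {G : ℂ → ℂ} (hG₁ : ContinuousWithinAt G K y₁) (hG₂ : ContinuousWithinAt G K y₂)
    (hu : ∀ᶠ x in l, u x ∈ K) (hv : ∀ᶠ x in l, v x ∈ K)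
    (hsum : Tendsto (fun x ↦ u x + v x) l (𝓝 (y₁ + y₂)))
    (hprod : Tendsto (fun x ↦ u x * v x) l (𝓝 (y₁ * y₂))) :
    Tendsto (fun x ↦ G (u x) + G (v x)) l (𝓝 (G y₁ + G y₂)) := by
  rw [Metric.tendsto_nhds]
  intro ε hε
  obtain ⟨δ₁, hδ₁, hG₁⟩ := Metric.continuousWithinAt_iff.1 hG₁ (ε / 2) (half_pos hε)
  obtain ⟨δ₂, hδ₂, hG₂⟩ := Metric.continuousWithinAt_iff.1 hG₂ (ε / 2) (half_pos hε)
  filter_upwards [hu, hv, eventually_near_of_tendsto_add_of_tendsto_mul hK hu hsum hprod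
    (lt_min hδ₁ hδ₂)] with x hux hvx hnear
  rcases hnear with ⟨h₁, h₂⟩ | ⟨h₁, h₂⟩
  · calc dist (G (u x) + G (v x)) (G y₁ + G y₂)
        ≤ dist (G (u x)) (G y₁) + dist (G (v x)) (G y₂) := dist_add_add_le _ _ _ _
      _ < ε / 2 + ε / 2 := by
        gcongr
        · exact hG₁ hux (by rw [dist_eq_norm]; exact h₁.trans_le (min_le_left _ _))
        · exact hG₂ hvx (by rw [dist_eq_norm]; exact h₂.trans_le (min_le_right _ _))
      _ = ε := add_halves ε
  · calc dist (G (u x) + G (v x)) (G y₁ + G y₂)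
        ≤ dist (G (u x)) (G y₂) + dist (G (v x)) (G y₁) := by
          rw [add_comm (G y₁)]; exact dist_add_add_le _ _ _ _
      _ < ε / 2 + ε / 2 := by
        gcongr
        · exact hG₂ hux (by rw [dist_eq_norm]; exact h₁.trans_le (min_le_right _ _))
        · exact hG₁ hvx (by rw [dist_eq_norm]; exact h₂.trans_le (min_le_left _ _))
      _ = ε := add_halves ε

end SymmetricFunctionsOfRoots

theorem differentiableAt_comp_add_comp_of_sq_eq {G s d e : ℂ → ℂ} {w₀ : ℂ}
    (hs : DifferentiableAt ℂ s w₀) (hd : DifferentiableAt ℂ d w₀) (hd₀ : d w₀ ≠ 0)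
    (he : ∀ w, e w ^ 2 = d w) (hG₁ : DifferentiableAt ℂ G ((s w₀ + e w₀) / 2))
    (hG₂ : DifferentiableAt ℂ G ((s w₀ - e w₀) / 2)) :
    DifferentiableAt ℂ (fun w ↦ G ((s w + e w) / 2) + G ((s w - e w) / 2)) w₀ := by
  -- a square root of `d` that is holomorphic near `w₀` and agrees with `e` at `w₀`
  set r : ℂ → ℂ := fun w ↦ e w₀ * (d w / d w₀) ^ (2⁻¹ : ℂ)
  have hr₀ : r w₀ = e w₀ := by simp [r, div_self hd₀]
  have hr : DifferentiableAt ℂ r w₀ :=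
    (hd.div_const _).cpow_const (by rw [div_self hd₀]; exact one_mem_slitPlane) |>.const_mul _
  have hsign : ∀ w, e w = r w ∨ e w = -r w := fun w ↦ by
    rw [← sq_eq_sq_iff_eq_or_eq_neg, he, mul_pow, cpow_ofNat_inv_pow, he,
      mul_div_cancel₀ _ hd₀]
  have heq : (fun w ↦ G ((s w + e w) / 2) + G ((s w - e w) / 2)) =
      fun w ↦ G ((s w + r w) / 2) + G ((s w - r w) / 2) := by
    ext w
    rcases hsign w with h | h <;> rw [h]
    rw [← sub_eq_add_neg, sub_neg_eq_add, add_comm]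
  rw [heq]
  rw [← hr₀] at hG₁ hG₂
  exact (hG₁.comp w₀ ((hs.add hr).div_const 2)).add (hG₂.comp w₀ ((hs.sub hr).div_const 2))

section CircleRoots

variable {a z w : ℂ} {ρ : ℝ}

noncomputable def circleDisc (a : ℂ) (ρ : ℝ) (w : ℂ) : ℂ :=
  (a + conj a * w) ^ 2 + 4 * (ρ ^ 2 - ‖a‖ ^ 2 : ℂ) * w

-- Any branch of the square root will do: only symmetric functions of the two roots are used.
noncomputable def circleRoot₁ (a : ℂ) (ρ : ℝ) (w : ℂ) : ℂ :=
  (a + conj a * w + circleDisc a ρ w ^ (2⁻¹ : ℂ)) / 2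

noncomputable def circleRoot₂ (a : ℂ) (ρ : ℝ) (w : ℂ) : ℂ :=
  (a + conj a * w - circleDisc a ρ w ^ (2⁻¹ : ℂ)) / 2

theorem circleRoot₁_add_circleRoot₂ (a : ℂ) (ρ : ℝ) (w : ℂ) :
    circleRoot₁ a ρ w + circleRoot₂ a ρ w = a + conj a * w := by
  rw [circleRoot₁, circleRoot₂]; ring

theorem circleRoot₁_mul_circleRoot₂ (a : ℂ) (ρ : ℝ) (w : ℂ) :
    circleRoot₁ a ρ w * circleRoot₂ a ρ w = -((ρ ^ 2 - ‖a‖ ^ 2 : ℂ) * w) := by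
  have h := cpow_ofNat_inv_pow (circleDisc a ρ w) 2
  rw [circleRoot₁, circleRoot₂, circleDisc]
  rw [circleDisc] at h
  linear_combination (-1 / 4 : ℂ) * h

theorem sub_circleRoot₁_mul_sub_circleRoot₂ (a : ℂ) (ρ : ℝ) (w z : ℂ) :
    (z - circleRoot₁ a ρ w) * (z - circleRoot₂ a ρ w) =
      z * (z - a) - w * circleDen a ρ z := by
  rw [circleDen]
  linear_combination (-z) * circleRoot₁_add_circleRoot₂ a ρ w +
    circleRoot₁_mul_circleRoot₂ a ρ w

theorem circleRoot₁_mul_sub (a : ℂ) (ρ : ℝ) (w : ℂ) :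
    circleRoot₁ a ρ w * (circleRoot₁ a ρ w - a) =
      w * circleDen a ρ (circleRoot₁ a ρ w) := by
  linear_combination -sub_circleRoot₁_mul_sub_circleRoot₂ a ρ w (circleRoot₁ a ρ w)

theorem circleRoot₂_mul_sub (a : ℂ) (ρ : ℝ) (w : ℂ) :
    circleRoot₂ a ρ w * (circleRoot₂ a ρ w - a) =
      w * circleDen a ρ (circleRoot₂ a ρ w) := by
  linear_combination -sub_circleRoot₁_mul_sub_circleRoot₂ a ρ w (circleRoot₂ a ρ w)

theorem mem_closedBall_of_mul_sub_eq (ha : ‖a‖ < ρ) (hw : ‖w‖ ≤ 1)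
    (hz : z * (z - a) = w * circleDen a ρ z) : z ∈ closedBall a ρ := by
  rw [← norm_mul_sub_le_norm_circleDen_iff ha, hz, norm_mul]
  exact mul_le_of_le_one_left (norm_nonneg _) hw

theorem mem_ball_of_mul_sub_eq (ha : ‖a‖ < ρ) (hw : ‖w‖ < 1)
    (hz : z * (z - a) = w * circleDen a ρ z) : z ∈ ball a ρ := by
  have hD := circleDen_ne_zero ha (mem_closedBall_of_mul_sub_eq ha hw.le hz)
  rw [← norm_mul_sub_lt_norm_circleDen_iff ha, hz, norm_mul]
  exact mul_lt_of_lt_one_left (norm_pos_iff.2 hD) hw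

theorem mem_sphere_of_mul_sub_eq (ha : ‖a‖ < ρ) (hw : ‖w‖ = 1)
    (hz : z * (z - a) = w * circleDen a ρ z) : z ∈ sphere a ρ := by
  rw [← closedBall_sdiff_ball]
  refine ⟨mem_closedBall_of_mul_sub_eq ha hw.le hz, fun hball ↦ ?_⟩
  have := (norm_mul_sub_lt_norm_circleDen_iff ha).2 hball
  rw [hz, norm_mul, hw, one_mul] at this
  exact this.false

theorem div_conj_eq_of_mul_sub_eq (ha : ‖a‖ < ρ) (hw : ‖w‖ = 1)
    (hz : z * (z - a) = w * circleDen a ρ z) : z / conj z = w := by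
  have hsphere := mem_sphere_of_mul_sub_eq ha hw hz
  have hρ : ρ ≠ 0 := ((norm_nonneg a).trans_lt ha).ne'
  rw [← circleBlaschke_eq_div_conj hρ hsphere, circleBlaschke, hz,
    mul_div_cancel_right₀ _ (circleDen_ne_zero ha (sphere_subset_closedBall hsphere))]

theorem finite_setOf_circleDisc_eq_zero (ha : ‖a‖ < ρ) :
    {w | circleDisc a ρ w = 0}.Finite := by
  have hβ : (2 * (a * conj a) + 4 * (ρ ^ 2 - ‖a‖ ^ 2 : ℂ)) ≠ 0 := by
    rw [mul_conj']
    have : 2 * ‖a‖ ^ 2 + 4 * (ρ ^ 2 - ‖a‖ ^ 2) ≠ 0 := by nlinarith [norm_nonneg a]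
    exact_mod_cast this
  convert finite_setOf_quadratic_eq_zero (.inr (.inl hβ)) (α := conj a ^ 2) (γ := a ^ 2)
    using 3 with w
  rw [circleDisc]
  ring_nf

end CircleRoots

section Symmetrization

variable {a : ℂ} {ρ : ℝ} {f G : ℂ → ℂ}

theorem continuousOn_circleRoots (ha : ‖a‖ < ρ) (hG : ContinuousOn G (closedBall a ρ)) :
    ContinuousOn (fun w ↦ G (circleRoot₁ a ρ w) + G (circleRoot₂ a ρ w))
      (closedBall 0 1) := by
  intro w₀ hw₀
  have hroots (w : ℂ) (hw : w ∈ closedBall (0 : ℂ) 1) :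
      circleRoot₁ a ρ w ∈ closedBall a ρ ∧ circleRoot₂ a ρ w ∈ closedBall a ρ := by
    rw [mem_closedBall_zero_iff] at hw
    exact ⟨mem_closedBall_of_mul_sub_eq ha hw (circleRoot₁_mul_sub a ρ w),
      mem_closedBall_of_mul_sub_eq ha hw (circleRoot₂_mul_sub a ρ w)⟩
  have hcont {φ : ℂ → ℂ} (hφ : Continuous φ) :
      Tendsto φ (𝓝[closedBall 0 1] w₀) (𝓝 (φ w₀)) :=
    hφ.continuousWithinAt
  refine tendsto_comp_add_comp_of_tendsto_add_of_tendsto_mul isBounded_closedBall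
    (hG _ (hroots w₀ hw₀).1) (hG _ (hroots w₀ hw₀).2)
    (eventually_nhdsWithin_of_forall fun w hw ↦ (hroots w hw).1)
    (eventually_nhdsWithin_of_forall fun w hw ↦ (hroots w hw).2) ?_ ?_
  · simp only [circleRoot₁_add_circleRoot₂]
    exact hcont (by fun_prop)
  · simp only [circleRoot₁_mul_circleRoot₂]
    exact hcont (by fun_prop)

theorem differentiableOn_circleRoots (ha : ‖a‖ < ρ) (hGc : ContinuousOn G (closedBall a ρ))
    (hGd : DifferentiableOn ℂ G (ball a ρ)) :
    DifferentiableOn ℂ (fun w ↦ G (circleRoot₁ a ρ w) + G (circleRoot₂ a ρ w))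
      (ball 0 1) := by
  have hdiff : ∀ w ∈ ball (0 : ℂ) (1 : NNReal) \ {w | circleDisc a ρ w = 0},
      DifferentiableAt ℂ (fun w ↦ G (circleRoot₁ a ρ w) + G (circleRoot₂ a ρ w)) w := by
    rintro w ⟨hw, hd⟩
    have hw : ‖w‖ < 1 := mem_ball_zero_iff.1 hw
    have hG {z : ℂ} (hz : z * (z - a) = w * circleDen a ρ z) : DifferentiableAt ℂ G z :=
      hGd.differentiableAt (isOpen_ball.mem_nhds (mem_ball_of_mul_sub_eq ha hw hz))
    exact differentiableAt_comp_add_comp_of_sq_eq (s := fun w ↦ a + conj a * w)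
      (by fun_prop) (by unfold circleDisc; fun_prop) hd
      (fun w ↦ cpow_ofNat_inv_pow (circleDisc a ρ w) 2)
      (hG (circleRoot₁_mul_sub a ρ w)) (hG (circleRoot₂_mul_sub a ρ w))
  have hps := Complex.hasFPowerSeriesOnBall_of_differentiable_off_countable
    (finite_setOf_circleDisc_eq_zero ha).countable
    (by simpa using continuousOn_circleRoots ha hGc) hdiff one_pos
  have := hps.differentiableOn
  rw [Metric.eball_coe] at this
  simpa using this

theorem sum_comp_circleRoots_div_conj
    (hline : ∀ z : ℂ, z ≠ 0 → ∀ t : ℝ, t ≠ 0 → f ((t : ℂ) * z) = f z)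
    (ha : ‖a‖ < ρ) (hGf : ∀ z ∈ sphere a ρ, G z = f z) {z : ℂ} (hz : z ≠ 0) :
    G (circleRoot₁ a ρ (z / conj z)) + G (circleRoot₂ a ρ (z / conj z)) = 2 * f z := by
  have hw : ‖z / conj z‖ = 1 := by
    rw [norm_div, Complex.norm_conj, div_self (norm_ne_zero_iff.2 hz)]
  have hroot {r : ℂ} (hr : r * (r - a) = z / conj z * circleDen a ρ r) : G r = f z := by
    have hsphere := mem_sphere_of_mul_sub_eq ha hw hr
    rw [hGf r hsphere, eq_of_div_conj_eq hline (ne_zero_of_mem_sphere_of_norm_lt ha hsphere) hz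
      (div_conj_eq_of_mul_sub_eq ha hw hr)]
  rw [hroot (circleRoot₁_mul_sub a ρ _), hroot (circleRoot₂_mul_sub a ρ _), two_mul]

theorem exists_eq_comp_div_conj_of_extHol
    (hline : ∀ z : ℂ, z ≠ 0 → ∀ t : ℝ, t ≠ 0 → f ((t : ℂ) * z) = f z)
    (ha : ‖a‖ < ρ) (hf : ExtHol f a ρ) :
    ∃ g : ℂ → ℂ, ContinuousOn g (closedBall 0 1) ∧ DifferentiableOn ℂ g (ball 0 1) ∧
      ∀ z : ℂ, z ≠ 0 → f z = g (z / conj z) := by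
  obtain ⟨G, hGc, hGd, hGf⟩ := hf
  refine ⟨fun w ↦ (G (circleRoot₁ a ρ w) + G (circleRoot₂ a ρ w)) / 2,
    (continuousOn_circleRoots ha hGc).div_const 2,
    (differentiableOn_circleRoots ha hGc hGd).div_const 2, fun z hz ↦ ?_⟩
  dsimp only
  rw [sum_comp_circleRoots_div_conj hline ha hGf hz, mul_div_cancel_left₀ _ two_ne_zero]

end Symmetrization

theorem stmt16_general (f : ℂ → ℂ)
    (hline : ∀ z : ℂ, z ≠ 0 → ∀ t : ℝ, t ≠ 0 → f ((t : ℂ) * z) = f z) :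
    ((∃ (a : ℂ) (ρ : ℝ), 0 < ρ ∧ ‖a‖ < ρ ∧ ExtHol f a ρ) ↔
      (∀ (a : ℂ) (ρ : ℝ), 0 < ρ → ‖a‖ < ρ → ExtHol f a ρ)) ∧
    ((∃ (a : ℂ) (ρ : ℝ), 0 < ρ ∧ ‖a‖ < ρ ∧ ExtHol f a ρ) ↔
      (∃ g : ℂ → ℂ, ContinuousOn g (closedBall 0 1) ∧
        DifferentiableOn ℂ g (ball 0 1) ∧
        ∀ z : ℂ, z ≠ 0 → f z = g (z / conj z))) := by
  have one_to_three : (∃ (a : ℂ) (ρ : ℝ), 0 < ρ ∧ ‖a‖ < ρ ∧ ExtHol f a ρ) →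
      ∃ g : ℂ → ℂ, ContinuousOn g (closedBall 0 1) ∧ DifferentiableOn ℂ g (ball 0 1) ∧
        ∀ z : ℂ, z ≠ 0 → f z = g (z / conj z) :=
    fun ⟨a, ρ, _, ha, hf⟩ ↦ exists_eq_comp_div_conj_of_extHol hline ha hf
  have three_to_two : (∃ g : ℂ → ℂ, ContinuousOn g (closedBall 0 1) ∧
      DifferentiableOn ℂ g (ball 0 1) ∧ ∀ z : ℂ, z ≠ 0 → f z = g (z / conj z)) →
      ∀ (a : ℂ) (ρ : ℝ), 0 < ρ → ‖a‖ < ρ → ExtHol f a ρ :=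
    fun ⟨_, hgc, hgd, hfg⟩ _ _ _ ha ↦ extHol_of_eq_comp_div_conj hgc hgd hfg ha
  have two_to_one : (∀ (a : ℂ) (ρ : ℝ), 0 < ρ → ‖a‖ < ρ → ExtHol f a ρ) →
      ∃ (a : ℂ) (ρ : ℝ), 0 < ρ ∧ ‖a‖ < ρ ∧ ExtHol f a ρ :=
    fun h ↦ ⟨0, 1, one_pos, by simp, h 0 1 one_pos (by simp)⟩
  exact ⟨⟨three_to_two ∘ one_to_three, two_to_one⟩,
    ⟨one_to_three, two_to_one ∘ three_to_two⟩⟩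

theorem stmt16 (f : ℂ → ℂ) (hf : ContinuousOn f {(0 : ℂ)}ᶜ)
    (hline : ∀ z : ℂ, z ≠ 0 → ∀ t : ℝ, t ≠ 0 → f ((t : ℂ) * z) = f z) :
    ((∃ (a : ℂ) (ρ : ℝ), 0 < ρ ∧ ‖a‖ < ρ ∧ ExtHol f a ρ) ↔
      (∀ (a : ℂ) (ρ : ℝ), 0 < ρ → ‖a‖ < ρ → ExtHol f a ρ)) ∧
    ((∃ (a : ℂ) (ρ : ℝ), 0 < ρ ∧ ‖a‖ < ρ ∧ ExtHol f a ρ) ↔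
      (∃ g : ℂ → ℂ, ContinuousOn g (closedBall 0 1) ∧
        DifferentiableOn ℂ g (ball 0 1) ∧
        ∀ z : ℂ, z ≠ 0 → f z = g (z / conj z))) :=
  stmt16_general f hline
end

section
/- Let f : ℂ \ {0} → ℂ be continuous and constant on each ray emanating from the origin, i.e. f(tz) = f(z) for all z ≠ 0 and all real t > 0. Suppose f extends holomorphically from bΔ(a,1) and from bΔ(b,1), where a, b ∈ ℂ, |a| < 1, |b| < 1, b ≠ a and b ≠ −a. Then there exists a function g from the disc algebra such that f(z) = g(z/|z|) for all z ≠ 0. Consequently f(tz) = f(z) for all z ≠ 0 and all real t ≠ 0, and f extends holomorphically from every circle bΔ(c,ρ) with |c| < ρ. -/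
open Complex Metric ComplexConjugate

/-!
For `|a| < 1` the rational map `fold a z = z (z - a) / (1 + ā (z - a))` sends the closed disc
`Δ̄(a,1)` two-to-one onto the closed unit disc, and on the circle `bΔ(a,1)` it is
`z ↦ (z/|z|)²`. The other preimage of `fold a z` is `deck a z`; on the circle it lies on the
ray opposite to `z`. Averaging a function `M` over the two preimages gives a function
`trace a M` of the disc algebra with `trace a M ∘ fold a = (M + M ∘ deck a) / 2`; at the single
critical value `critVal a` this needs the removable singularity theorem.

Let `G` extend `f` from `bΔ(a,1)` and put `H = (G - G ∘ deck a) / 2`. The function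
`X = trace a (H²)` has the boundary values `X(u²) = ((f(u) - f(-u)) / 2)²`, and so does the
function built in the same way from `b`. By the maximum principle the two functions are equal.
Suppose `X ≠ 0`. Let `m` be its order at `critVal a`. Then `H` has order `m` at the critical
point of `fold a`, and `m` is odd because `H` changes sign under `deck a`, an involution with
derivative `-1` at its fixed point. Since `b ≠ ±a`, `critVal a` is a regular value of `fold b`,
and there `X ∘ fold b` is a square, so `m` is even. This contradiction gives `X = 0`, that is,
`f(-u) = f(u)`. Now `Y = trace a G` satisfies `f(z) = Y((z/|z|)²)`, and all three claims follow
from this: `g(ζ) = Y(ζ²)`, and `Y ∘ fold (c/ρ) ∘ (· / ρ)` extends `f` from `bΔ(c,ρ)`.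
-/

open Filter Topology Set

theorem apply_add_apply_eq_of_add_eq_of_mul_eq {R S : Type*} [CommRing R] [IsDomain R]
    [AddCommMagma S] {r₁ r₂ q₁ q₂ : R} (hs : r₁ + r₂ = q₁ + q₂) (hp : r₁ * r₂ = q₁ * q₂)
    (M : R → S) : M r₁ + M r₂ = M q₁ + M q₂ := by
  have : (r₁ - q₁) * (r₁ - q₂) = 0 := by linear_combination r₁ * hs - hp
  rcases mul_eq_zero.mp this with h | h
  · obtain rfl : r₁ = q₁ := sub_eq_zero.mp h
    obtain rfl : r₂ = q₂ := add_left_cancel hs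
    rfl
  · obtain rfl : r₁ = q₂ := sub_eq_zero.mp h
    obtain rfl : r₂ = q₁ := by linear_combination hs
    exact add_comm _ _

theorem exists_pos_smul_mem_sphere {E : Type*} [NormedAddCommGroup E] [NormedSpace ℝ E]
    {a u : E} {r : ℝ} (ha : ‖a‖ < r) (hu : u ≠ 0) : ∃ t : ℝ, 0 < t ∧ t • u ∈ sphere a r := by
  have hu' : 0 < ‖u‖ := norm_pos_iff.mpr hu
  set T := (r + ‖a‖) / ‖u‖
  have hT : 0 ≤ T := div_nonneg (by linarith [norm_nonneg a]) hu'.le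
  have hcont : ContinuousOn (fun t : ℝ ↦ ‖t • u - a‖) (Icc 0 T) := by fun_prop
  have hr : r ∈ Icc ‖(0 : ℝ) • u - a‖ ‖T • u - a‖ := by
    refine ⟨by simpa using ha.le, ?_⟩
    calc r = ‖T • u‖ - ‖a‖ := by
          rw [norm_smul, Real.norm_of_nonneg hT, div_mul_cancel₀ _ hu'.ne']; ring
      _ ≤ ‖T • u - a‖ := norm_sub_norm_le _ _
  obtain ⟨t, ht, htr⟩ := intermediate_value_Icc hT hcont hr
  refine ⟨t, ht.1.lt_of_ne ?_, by simpa [dist_eq_norm] using htr⟩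
  rintro rfl
  simp only [zero_smul, zero_sub, norm_neg] at htr
  exact ha.ne htr

theorem exists_differentiableAt_sq_eq {D : ℂ → ℂ} {w₀ : ℂ} (hD : DifferentiableAt ℂ D w₀)
    (h₀ : D w₀ ≠ 0) : ∃ σ : ℂ → ℂ, DifferentiableAt ℂ σ w₀ ∧ ∀ w, σ w ^ 2 = D w := by
  refine ⟨fun w ↦ D w₀ ^ (2⁻¹ : ℂ) * (D w / D w₀) ^ (2⁻¹ : ℂ), ?_, fun w ↦ ?_⟩
  · have : D w₀ / D w₀ ∈ slitPlane := by rw [div_self h₀]; exact one_mem_slitPlane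
    exact (differentiableAt_const _).mul ((hD.div_const _).cpow_const this)
  · rw [mul_pow, cpow_ofNat_inv_pow, cpow_ofNat_inv_pow]
    field_simp

theorem odd_of_analyticOrderAt_eq_of_comp_eq_neg {H ι : ℂ → ℂ} {z₀ : ℂ} {n : ℕ}
    (hH : AnalyticAt ℂ H z₀) (hn : analyticOrderAt H z₀ = n)
    (hι : HasDerivAt ι (-1) z₀) (hι₀ : ι z₀ = z₀)
    (hodd : ∀ᶠ z in 𝓝 z₀, H (ι z) = -H z) : Odd n := by
  obtain ⟨h, hh, hh₀, hHh⟩ := hH.analyticOrderAt_eq_natCast.mp hn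
  have hιt : Tendsto ι (𝓝 z₀) (𝓝 z₀) := by simpa [hι₀] using hι.continuousAt.tendsto
  have hslope : Tendsto (fun z ↦ (ι z - z₀) / (z - z₀)) (𝓝[≠] z₀) (𝓝 (-1)) := by
    simpa [slope_fun_def_field, hι₀] using hasDerivAt_iff_tendsto_slope.mp hι
  have heq : ∀ᶠ z in 𝓝[≠] z₀, ((ι z - z₀) / (z - z₀)) ^ n * h (ι z) = -h z := by
    filter_upwards [nhdsWithin_le_nhds (hιt.eventually hHh), nhdsWithin_le_nhds hHh,
      nhdsWithin_le_nhds hodd, self_mem_nhdsWithin] with z h₁ h₂ h₃ hz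
    have hz' : (z - z₀) ^ n ≠ 0 := pow_ne_zero _ (sub_ne_zero.mpr hz)
    rw [h₁, h₂, smul_eq_mul, smul_eq_mul] at h₃
    rw [div_pow]
    field_simp
    linear_combination h₃
  have hlim : Tendsto (fun z ↦ ((ι z - z₀) / (z - z₀)) ^ n * h (ι z)) (𝓝[≠] z₀)
      (𝓝 ((-1) ^ n * h z₀)) :=
    (hslope.pow n).mul ((hh.continuousAt.tendsto.comp hιt).mono_left nhdsWithin_le_nhds)
  have hval : (-1 : ℂ) ^ n * h z₀ = -1 * h z₀ := by
    rw [neg_one_mul]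
    exact tendsto_nhds_unique (hlim.congr' heq)
      (hh.continuousAt.neg.tendsto.mono_left nhdsWithin_le_nhds)
  exact (neg_one_pow_eq_neg_one_iff_odd (by norm_num)).mp (mul_right_cancel₀ hh₀ hval)

theorem two_mul_analyticOrderAt_eq_of_comp_eq_sq {H X φ : ℂ → ℂ} {z₀ : ℂ}
    (hH : AnalyticAt ℂ H z₀) (hX : AnalyticAt ℂ X (φ z₀)) (hφ : AnalyticAt ℂ φ z₀)
    (h : ∀ᶠ z in 𝓝 z₀, X (φ z) = H z ^ 2) :
    2 * analyticOrderAt H z₀ =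
      analyticOrderAt X (φ z₀) * analyticOrderAt (fun z ↦ φ z - φ z₀) z₀ := by
  have h' : X ∘ φ =ᶠ[𝓝 z₀] H ^ 2 := h
  rw [← hX.analyticOrderAt_comp hφ, analyticOrderAt_congr h', analyticOrderAt_pow hH,
    nsmul_eq_mul, Nat.cast_ofNat]

def RayInvariant (f : ℂ → ℂ) : Prop :=
  ∀ z : ℂ, z ≠ 0 → ∀ t : ℝ, 0 < t → f ((t : ℂ) * z) = f z

theorem norm_div_norm {z : ℂ} (hz : z ≠ 0) : ‖z / ‖z‖‖ = 1 := by
  rw [norm_div, norm_real, norm_norm, div_self (norm_ne_zero_iff.mpr hz)]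

theorem RayInvariant.apply_div_norm {f : ℂ → ℂ} (hf : RayInvariant f) {z : ℂ} (hz : z ≠ 0) :
    f (z / ‖z‖) = f z := by
  have hn : (‖z‖ : ℂ) ≠ 0 := ofReal_ne_zero.mpr (norm_ne_zero_iff.mpr hz)
  rw [← hf (z / ‖z‖) (div_ne_zero hz hn) ‖z‖ (norm_pos_iff.mpr hz), mul_div_cancel₀ _ hn]

theorem div_norm_sq_ofReal_mul {t : ℝ} (ht : t ≠ 0) (z : ℂ) :
    (t * z / ‖(t : ℂ) * z‖) ^ 2 = (z / ‖z‖) ^ 2 := by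
  rcases eq_or_ne z 0 with rfl | hz
  · simp
  have hz' : (‖z‖ : ℂ) ≠ 0 := ofReal_ne_zero.mpr (norm_ne_zero_iff.mpr hz)
  have ht' : (t : ℂ) ≠ 0 := ofReal_ne_zero.mpr ht
  rw [norm_mul, norm_real, Real.norm_eq_abs, ofReal_mul, div_pow, div_pow, mul_pow, mul_pow,
    ← ofReal_pow |t|, sq_abs, ofReal_pow]
  field_simp

noncomputable section

namespace DiscFold

def den (a z : ℂ) : ℂ := 1 + conj a * (z - a)

def fold (a z : ℂ) : ℂ := z * (z - a) / den a z

def deck (a z : ℂ) : ℂ := (conj a * a - 1) * (z - a) / den a z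

variable {a z w : ℂ}

theorem norm_sq_sub_norm_den_sq (a z : ℂ) :
    ‖z‖ ^ 2 - ‖den a z‖ ^ 2 = (‖z - a‖ ^ 2 - 1) * (1 - ‖a‖ ^ 2) := by
  simp only [← normSq_eq_norm_sq]
  have key : ((normSq z - normSq (den a z) : ℝ) : ℂ) =
      ((normSq (z - a) - 1) * (1 - normSq a) : ℝ) := by
    push_cast
    simp only [← mul_conj, den, map_add, map_mul, map_sub, map_one, conj_conj]
    ring
  exact_mod_cast key

theorem den_ne_zero (ha : ‖a‖ < 1) (hz : ‖z - a‖ ≤ 1) : den a z ≠ 0 := by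
  intro h
  have : ‖conj a * (z - a)‖ = 1 := by
    rw [show conj a * (z - a) = -1 by rw [den] at h; linear_combination h]; simp
  rw [norm_mul, RCLike.norm_conj] at this
  nlinarith [norm_nonneg a, norm_nonneg (z - a)]

theorem norm_lt_norm_den_iff (ha : ‖a‖ < 1) : ‖z‖ < ‖den a z‖ ↔ ‖z - a‖ < 1 := by
  have h := norm_sq_sub_norm_den_sq a z
  have ha' : 0 < 1 - ‖a‖ ^ 2 := by nlinarith [norm_nonneg a]
  rw [← sq_lt_sq₀ (norm_nonneg _) (norm_nonneg _), ← sq_lt_one_iff₀ (norm_nonneg _)]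
  constructor <;> intro h' <;> nlinarith

theorem norm_le_norm_den_iff (ha : ‖a‖ < 1) : ‖z‖ ≤ ‖den a z‖ ↔ ‖z - a‖ ≤ 1 := by
  have h := norm_sq_sub_norm_den_sq a z
  have ha' : 0 < 1 - ‖a‖ ^ 2 := by nlinarith [norm_nonneg a]
  rw [← sq_le_sq₀ (norm_nonneg _) (norm_nonneg _), ← sq_le_one_iff₀ (norm_nonneg _)]
  constructor <;> intro h' <;> nlinarith

theorem norm_fold_lt_one_iff (ha : ‖a‖ < 1) (hd : den a z ≠ 0) :
    ‖fold a z‖ < 1 ↔ ‖z - a‖ < 1 := by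
  rw [fold, norm_div, norm_mul, div_lt_one (norm_pos_iff.mpr hd)]
  constructor
  · intro h
    by_contra! h'
    have : ‖den a z‖ ≤ ‖z‖ := not_lt.mp fun hlt ↦ (not_lt.mpr h') ((norm_lt_norm_den_iff ha).mp hlt)
    nlinarith [norm_nonneg (den a z)]
  · intro h
    have := (norm_lt_norm_den_iff ha).mpr h
    nlinarith [norm_nonneg z, norm_nonneg (z - a)]

theorem norm_fold_le_one_iff (ha : ‖a‖ < 1) (hd : den a z ≠ 0) :
    ‖fold a z‖ ≤ 1 ↔ ‖z - a‖ ≤ 1 := by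
  rw [fold, norm_div, norm_mul, div_le_one (norm_pos_iff.mpr hd)]
  constructor
  · intro h
    by_contra! h'
    have : ‖den a z‖ < ‖z‖ := not_le.mp fun hle ↦ (not_le.mpr h') ((norm_le_norm_den_iff ha).mp hle)
    nlinarith [norm_pos_iff.mpr hd]
  · intro h
    have := (norm_le_norm_den_iff ha).mpr h
    nlinarith [norm_nonneg z, norm_nonneg (z - a)]

theorem fold_mem_closedBall (ha : ‖a‖ < 1) (hz : z ∈ closedBall a 1) :
    fold a z ∈ closedBall 0 1 := by
  rw [mem_closedBall_iff_norm] at hz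
  rwa [mem_closedBall_zero_iff, norm_fold_le_one_iff ha (den_ne_zero ha hz)]

theorem fold_mem_ball (ha : ‖a‖ < 1) (hz : z ∈ ball a 1) : fold a z ∈ ball 0 1 := by
  rw [mem_ball_iff_norm] at hz
  rwa [mem_ball_zero_iff, norm_fold_lt_one_iff ha (den_ne_zero ha hz.le)]

theorem den_ne_zero_of_mul_eq (ha : ‖a‖ < 1) (hz : z * (z - a) = w * den a z) :
    den a z ≠ 0 := by
  intro hd
  rw [hd, mul_zero, mul_eq_zero, sub_eq_zero] at hz
  rcases hz with rfl | rfl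
  · exact den_ne_zero ha (by simpa using ha.le) hd
  · exact den_ne_zero ha (by simp) hd

theorem fold_eq_of_mul_eq (ha : ‖a‖ < 1) (hz : z * (z - a) = w * den a z) : fold a z = w :=
  (div_eq_iff (den_ne_zero_of_mul_eq ha hz)).mpr hz

theorem mem_closedBall_of_mul_eq (ha : ‖a‖ < 1) (hz : z * (z - a) = w * den a z)
    (hw : ‖w‖ ≤ 1) : z ∈ closedBall a 1 := by
  rwa [mem_closedBall_iff_norm, ← norm_fold_le_one_iff ha (den_ne_zero_of_mul_eq ha hz),
    fold_eq_of_mul_eq ha hz]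

theorem mem_ball_of_mul_eq (ha : ‖a‖ < 1) (hz : z * (z - a) = w * den a z)
    (hw : ‖w‖ < 1) : z ∈ ball a 1 := by
  rwa [mem_ball_iff_norm, ← norm_fold_lt_one_iff ha (den_ne_zero_of_mul_eq ha hz),
    fold_eq_of_mul_eq ha hz]

theorem mul_eq_of_add_eq_of_mul_eq {q₁ q₂ : ℂ} (h₁ : q₁ + q₂ = a + conj a * w)
    (h₂ : q₁ * q₂ = (conj a * a - 1) * w) : q₁ * (q₁ - a) = w * den a q₁ := by
  rw [den]
  linear_combination q₁ * h₁ - h₂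

theorem add_deck (hd : den a z ≠ 0) : z + deck a z = a + conj a * fold a z := by
  rw [deck, fold, den] at *
  field_simp
  ring

theorem mul_deck (a z : ℂ) : z * deck a z = (conj a * a - 1) * fold a z := by
  rw [deck, fold]
  ring

theorem deck_mul_eq (hd : den a z ≠ 0) :
    deck a z * (deck a z - a) = fold a z * den a (deck a z) :=
  mul_eq_of_add_eq_of_mul_eq (by rw [add_comm, add_deck hd]) (by rw [mul_comm, mul_deck])

theorem fold_deck (ha : ‖a‖ < 1) (hd : den a z ≠ 0) : fold a (deck a z) = fold a z :=
  fold_eq_of_mul_eq ha (deck_mul_eq hd)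

theorem deck_mem_closedBall (ha : ‖a‖ < 1) (hz : z ∈ closedBall a 1) :
    deck a z ∈ closedBall a 1 :=
  mem_closedBall_of_mul_eq ha (deck_mul_eq (den_ne_zero ha (mem_closedBall_iff_norm.mp hz)))
    (mem_closedBall_zero_iff.mp (fold_mem_closedBall ha hz))

theorem deck_mem_ball (ha : ‖a‖ < 1) (hz : z ∈ ball a 1) : deck a z ∈ ball a 1 :=
  mem_ball_of_mul_eq ha (deck_mul_eq (den_ne_zero ha (mem_ball_iff_norm.mp hz).le))
    (mem_ball_zero_iff.mp (fold_mem_ball ha hz))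

theorem deck_deck (ha : ‖a‖ < 1) (hz : z ∈ closedBall a 1) : deck a (deck a z) = z := by
  have hd := den_ne_zero ha (mem_closedBall_iff_norm.mp hz)
  have hd' := den_ne_zero ha (mem_closedBall_iff_norm.mp (deck_mem_closedBall ha hz))
  linear_combination add_deck hd' - add_deck hd + conj a * fold_deck ha hd

theorem differentiableAt_fold (hd : den a z ≠ 0) : DifferentiableAt ℂ (fold a) z := by
  unfold fold den at *
  fun_prop (disch := assumption)

theorem differentiableAt_deck (hd : den a z ≠ 0) : DifferentiableAt ℂ (deck a) z := by
  unfold deck den at *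
  fun_prop (disch := assumption)

theorem continuousOn_fold (ha : ‖a‖ < 1) : ContinuousOn (fold a) (closedBall a 1) := fun _ hz ↦
  (differentiableAt_fold (den_ne_zero ha (mem_closedBall_iff_norm.mp hz))).continuousAt
    |>.continuousWithinAt

theorem differentiableOn_fold (ha : ‖a‖ < 1) : DifferentiableOn ℂ (fold a) (ball a 1) :=
  fun _ hz ↦ (differentiableAt_fold (den_ne_zero ha (mem_ball_iff_norm.mp hz).le))
    |>.differentiableWithinAt

theorem analyticAt_fold (ha : ‖a‖ < 1) (hz : z ∈ ball a 1) : AnalyticAt ℂ (fold a) z :=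
  (differentiableOn_fold ha).analyticAt (isOpen_ball.mem_nhds hz)

theorem continuousOn_deck (ha : ‖a‖ < 1) : ContinuousOn (deck a) (closedBall a 1) := fun _ hz ↦
  (differentiableAt_deck (den_ne_zero ha (mem_closedBall_iff_norm.mp hz))).continuousAt
    |>.continuousWithinAt

theorem differentiableOn_deck (ha : ‖a‖ < 1) : DifferentiableOn ℂ (deck a) (ball a 1) :=
  fun _ hz ↦ (differentiableAt_deck (den_ne_zero ha (mem_ball_iff_norm.mp hz).le))
    |>.differentiableWithinAt

/-- The discriminant of the quadratic equation `z (z - a) = w * den a z` in `z`. -/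
def disc (a w : ℂ) : ℂ := (a + conj a * w) ^ 2 + 4 * (1 - conj a * a) * w

def sqrtOneSubNormSq (a : ℂ) : ℝ := √(1 - ‖a‖ ^ 2)

def critPt (a : ℂ) : ℂ := sqrtOneSubNormSq a / (1 + sqrtOneSubNormSq a) * a

def critVal (a : ℂ) : ℂ := -a ^ 2 / (1 + sqrtOneSubNormSq a) ^ 2

theorem sqrtOneSubNormSq_pos (ha : ‖a‖ < 1) : 0 < sqrtOneSubNormSq a :=
  Real.sqrt_pos.mpr (by nlinarith [norm_nonneg a])

theorem sq_sqrtOneSubNormSq (ha : ‖a‖ < 1) : sqrtOneSubNormSq a ^ 2 = 1 - ‖a‖ ^ 2 :=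
  Real.sq_sqrt (by nlinarith [norm_nonneg a])

theorem ofReal_sqrtOneSubNormSq_sq (ha : ‖a‖ < 1) :
    (sqrtOneSubNormSq a : ℂ) ^ 2 = 1 - conj a * a := by
  rw [conj_mul', ← ofReal_pow, sq_sqrtOneSubNormSq ha]
  push_cast
  ring

theorem one_add_sqrtOneSubNormSq_ne_zero (ha : ‖a‖ < 1) : (1 + sqrtOneSubNormSq a : ℂ) ≠ 0 := by
  exact_mod_cast (add_pos one_pos (sqrtOneSubNormSq_pos ha)).ne'

theorem mul_sub_critVal_mul_den (ha : ‖a‖ < 1) (z : ℂ) :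
    z * (z - a) - critVal a * den a z = (z - critPt a) ^ 2 := by
  have hT := ofReal_sqrtOneSubNormSq_sq ha
  have h1 := one_add_sqrtOneSubNormSq_ne_zero ha
  rw [critVal, critPt, den]
  field_simp
  linear_combination (a * z - a ^ 2) * hT

theorem add_conj_mul_critVal (ha : ‖a‖ < 1) : a + conj a * critVal a = 2 * critPt a := by
  have hT := ofReal_sqrtOneSubNormSq_sq ha
  have h1 := one_add_sqrtOneSubNormSq_ne_zero ha
  rw [critVal, critPt]
  field_simp
  linear_combination -a * hT

theorem critPt_sq (ha : ‖a‖ < 1) : critPt a ^ 2 = (conj a * a - 1) * critVal a := by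
  have hT := ofReal_sqrtOneSubNormSq_sq ha
  have h1 := one_add_sqrtOneSubNormSq_ne_zero ha
  rw [critVal, critPt]
  field_simp
  linear_combination a ^ 2 * hT

theorem den_critPt (ha : ‖a‖ < 1) : den a (critPt a) = sqrtOneSubNormSq a := by
  have hT := ofReal_sqrtOneSubNormSq_sq ha
  have h1 := one_add_sqrtOneSubNormSq_ne_zero ha
  rw [den, critPt]
  field_simp
  linear_combination -hT

theorem critPt_mem_ball (ha : ‖a‖ < 1) : critPt a ∈ ball a 1 := by
  have ht := sqrtOneSubNormSq_pos ha
  have h : critPt a - a = -(1 / (1 + sqrtOneSubNormSq a) : ℝ) * a := by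
    have h1 := one_add_sqrtOneSubNormSq_ne_zero ha
    rw [critPt]; push_cast; field_simp; ring
  rw [mem_ball_iff_norm, h, norm_mul, norm_neg, norm_real, Real.norm_of_nonneg (by positivity)]
  calc 1 / (1 + sqrtOneSubNormSq a) * ‖a‖ ≤ 1 * ‖a‖ := by
        gcongr; rw [div_le_one (by linarith)]; linarith
    _ < 1 := by linarith

theorem norm_critVal (ha : ‖a‖ < 1) :
    ‖critVal a‖ = (1 - sqrtOneSubNormSq a) / (1 + sqrtOneSubNormSq a) := by
  have ht := sqrtOneSubNormSq_pos ha
  have hsq := sq_sqrtOneSubNormSq ha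
  rw [critVal, norm_div, norm_neg, norm_pow, norm_pow, show (1 + sqrtOneSubNormSq a : ℂ) =
    ((1 + sqrtOneSubNormSq a : ℝ) : ℂ) by push_cast; rfl, norm_real,
    Real.norm_of_nonneg (by positivity),
    show ‖a‖ ^ 2 = (1 - sqrtOneSubNormSq a) * (1 + sqrtOneSubNormSq a) by linarith]
  field_simp

theorem critVal_mem_ball (ha : ‖a‖ < 1) : critVal a ∈ ball 0 1 := by
  have ht := sqrtOneSubNormSq_pos ha
  rw [mem_ball_zero_iff, norm_critVal ha, div_lt_one (by linarith)]
  linarith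

theorem eq_critVal_of_disc_eq_zero (ha : ‖a‖ < 1) (hw : ‖w‖ ≤ 1) (h : disc a w = 0) :
    w = critVal a := by
  rcases eq_or_ne a 0 with rfl | ha₀
  · simpa [disc, critVal] using h
  have hT := ofReal_sqrtOneSubNormSq_sq ha
  have h1 := one_add_sqrtOneSubNormSq_ne_zero ha
  have hcv : (1 + (sqrtOneSubNormSq a : ℂ)) ^ 2 * critVal a = -a ^ 2 := by
    rw [critVal]; field_simp
  set T : ℂ := (sqrtOneSubNormSq a : ℂ)
  -- the other root `-a² / (1 - T)²` of `disc a` lies outside the closed unit disc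
  have hfac : a ^ 2 * disc a w = (1 + T) ^ 2 * (w - critVal a) * ((1 - T) ^ 2 * w + a ^ 2) := by
    rw [disc]
    linear_combination ((1 - T ^ 2 + conj a * a) * w ^ 2 - 2 * a ^ 2 * w) * hT +
      ((1 - T) ^ 2 * w + a ^ 2) * hcv
  rw [h, mul_zero, eq_comm] at hfac
  rcases mul_eq_zero.mp hfac with hfac | hfac
  · exact sub_eq_zero.mp ((mul_eq_zero.mp hfac).resolve_left (pow_ne_zero 2 h1))
  exfalso
  have ht := sqrtOneSubNormSq_pos ha
  have hsq := sq_sqrtOneSubNormSq ha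
  have ht1 : sqrtOneSubNormSq a < 1 := by nlinarith [norm_pos_iff.mpr ha₀]
  have : ‖a‖ ^ 2 = (1 - sqrtOneSubNormSq a) ^ 2 * ‖w‖ := by
    rw [← norm_pow, show a ^ 2 = -((1 - T) ^ 2 * w) by linear_combination hfac, norm_neg,
      norm_mul, norm_pow, show (1 - T) = ((1 - sqrtOneSubNormSq a : ℝ) : ℂ) by push_cast; rfl,
      norm_real, Real.norm_eq_abs, sq_abs]
  nlinarith [mul_le_mul_of_nonneg_left hw (sq_nonneg (1 - sqrtOneSubNormSq a))]

theorem critVal_inj {b : ℂ} (ha : ‖a‖ < 1) (hb : ‖b‖ < 1) (h : critVal a = critVal b) :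
    b = a ∨ b = -a := by
  have hta := sqrtOneSubNormSq_pos ha
  have htb := sqrtOneSubNormSq_pos hb
  have hnorm := norm_critVal ha
  rw [h, norm_critVal hb, div_eq_div_iff (by linarith) (by linarith)] at hnorm
  have ht : sqrtOneSubNormSq a = sqrtOneSubNormSq b := by linarith
  rw [critVal, critVal, ht] at h
  have hsq : b ^ 2 = a ^ 2 := by
    have := one_add_sqrtOneSubNormSq_ne_zero hb
    field_simp at h
    linear_combination h
  exact sq_eq_sq_iff_eq_or_eq_neg.mp hsq

theorem fold_critPt (ha : ‖a‖ < 1) : fold a (critPt a) = critVal a :=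
  fold_eq_of_mul_eq ha (by linear_combination mul_sub_critVal_mul_den ha (critPt a))

theorem fold_sub_critVal (ha : ‖a‖ < 1) (hd : den a z ≠ 0) :
    fold a z - critVal a = (z - critPt a) ^ 2 / den a z := by
  rw [← mul_sub_critVal_mul_den ha, fold]
  field_simp

theorem den_critPt_ne_zero (ha : ‖a‖ < 1) : den a (critPt a) ≠ 0 :=
  den_ne_zero ha (mem_ball_iff_norm.mp (critPt_mem_ball ha)).le

theorem analyticOrderAt_fold_sub_critVal (ha : ‖a‖ < 1) :
    analyticOrderAt (fun z ↦ fold a z - fold a (critPt a)) (critPt a) = 2 := by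
  have hd := den_critPt_ne_zero ha
  have hden : AnalyticAt ℂ (den a) (critPt a) := by
    unfold den
    fun_prop
  refine ((analyticAt_fold ha (critPt_mem_ball ha)).sub analyticAt_const).analyticOrderAt_eq_natCast
    |>.mpr ⟨fun z ↦ (den a z)⁻¹, hden.inv hd, inv_ne_zero hd, ?_⟩
  filter_upwards [hden.continuousAt.eventually_ne hd] with z hz
  show fold a z - fold a (critPt a) = _
  rw [fold_critPt ha, fold_sub_critVal ha hz, smul_eq_mul, div_eq_mul_inv]

theorem deck_critPt (ha : ‖a‖ < 1) : deck a (critPt a) = critPt a := by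
  linear_combination add_deck (den_critPt_ne_zero ha) + conj a * fold_critPt ha +
    add_conj_mul_critVal ha

theorem hasDerivAt_deck (hd : den a z ≠ 0) :
    HasDerivAt (deck a) ((conj a * a - 1) / den a z ^ 2) z := by
  have hden : HasDerivAt (den a) (conj a * 1) z :=
    (((hasDerivAt_id z).sub_const a).const_mul (conj a)).const_add 1
  refine ((((hasDerivAt_id z).sub_const a).const_mul (conj a * a - 1)).div hden hd).congr_deriv ?_
  have hd' : 1 + conj a * (z - a) ≠ 0 := hd
  simp only [den, id]
  field_simp
  ring

theorem hasDerivAt_deck_critPt (ha : ‖a‖ < 1) : HasDerivAt (deck a) (-1) (critPt a) := by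
  convert hasDerivAt_deck (den_critPt_ne_zero ha) using 1
  have hT := ofReal_sqrtOneSubNormSq_sq ha
  have hT0 : (sqrtOneSubNormSq a : ℂ) ^ 2 ≠ 0 := by
    exact_mod_cast (pow_pos (sqrtOneSubNormSq_pos ha) 2).ne'
  rw [den_critPt ha, eq_div_iff hT0]
  linear_combination -hT

def branch (a w σ : ℂ) : ℂ := (a + conj a * w + σ) / 2

def trace (a : ℂ) (M : ℂ → ℂ) (w : ℂ) : ℂ :=
  (M (branch a w (disc a w ^ (2⁻¹ : ℂ))) + M (branch a w (-disc a w ^ (2⁻¹ : ℂ)))) / 2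

theorem mul_sub_mul_den_eq {σ : ℂ} (hσ : σ ^ 2 = disc a w) (z : ℂ) :
    z * (z - a) - w * den a z = (z - branch a w σ) * (z - branch a w (-σ)) := by
  rw [den, branch, branch]
  rw [disc] at hσ
  linear_combination (1 / 4) * hσ

theorem branch_mul_eq {σ : ℂ} (hσ : σ ^ 2 = disc a w) :
    branch a w σ * (branch a w σ - a) = w * den a (branch a w σ) := by
  linear_combination mul_sub_mul_den_eq hσ (branch a w σ)

theorem trace_eq {q₁ q₂ : ℂ} (h₁ : q₁ + q₂ = a + conj a * w)
    (h₂ : q₁ * q₂ = (conj a * a - 1) * w) (M : ℂ → ℂ) : trace a M w = (M q₁ + M q₂) / 2 := by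
  rw [trace, apply_add_apply_eq_of_add_eq_of_mul_eq _ _ M]
  · rw [h₁, branch, branch]; ring
  · have h := cpow_ofNat_inv_pow (disc a w) 2
    rw [h₂, branch, branch]
    rw [disc] at h ⊢
    linear_combination (-1 / 4) * h

theorem trace_eq_of_forall_sq_eq {σ : ℂ → ℂ} (hσ : ∀ w, σ w ^ 2 = disc a w) (M : ℂ → ℂ) :
    trace a M = fun w ↦ (M (branch a w (σ w)) + M (branch a w (-σ w))) / 2 := by
  funext w
  refine trace_eq (by rw [branch, branch]; ring) ?_ M
  have h := hσ w
  rw [branch, branch]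
  rw [disc] at h
  linear_combination (-1 / 4) * h

theorem trace_fold (hd : den a z ≠ 0) (M : ℂ → ℂ) :
    trace a M (fold a z) = (M z + M (deck a z)) / 2 :=
  trace_eq (add_deck hd) (mul_deck a z) M

theorem trace_critVal (ha : ‖a‖ < 1) (M : ℂ → ℂ) : trace a M (critVal a) = M (critPt a) := by
  rw [trace_eq (q₁ := critPt a) (q₂ := critPt a) (by rw [add_conj_mul_critVal ha]; ring)
    (by rw [← sq, critPt_sq ha]) M, add_self_div_two]

theorem exists_fold_eq_analyticOrderAt_eq_one (ha : ‖a‖ < 1) (hw : w ∈ ball 0 1)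
    (hne : w ≠ critVal a) : ∃ z ∈ ball a 1, fold a z = w ∧
      analyticOrderAt (fun z' ↦ fold a z' - fold a z) z = 1 := by
  have hD : disc a w ≠ 0 := fun hD ↦
    hne (eq_critVal_of_disc_eq_zero ha (mem_ball_zero_iff.mp hw).le hD)
  set σ := disc a w ^ (2⁻¹ : ℂ)
  have hσ : σ ^ 2 = disc a w := cpow_ofNat_inv_pow _ _
  have hσ₀ : σ ≠ 0 := by rintro h; rw [h] at hσ; exact hD (by simpa using hσ.symm)
  set z₁ := branch a w σ
  have hz₁ := branch_mul_eq hσ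
  have hd₁ := den_ne_zero_of_mul_eq ha hz₁
  have hden : AnalyticAt ℂ (den a) z₁ := by
    unfold den
    fun_prop
  have hmem := mem_ball_of_mul_eq ha hz₁ (mem_ball_zero_iff.mp hw)
  refine ⟨z₁, hmem, fold_eq_of_mul_eq ha hz₁, ?_⟩
  refine ((analyticAt_fold ha hmem).sub analyticAt_const).analyticOrderAt_eq_natCast.mpr
    ⟨fun z ↦ (z - branch a w (-σ)) / den a z, (analyticAt_id.sub analyticAt_const).div hden hd₁,
      div_ne_zero (by simp only [branch]; intro h; apply hσ₀; linear_combination h) hd₁, ?_⟩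
  filter_upwards [hden.continuousAt.eventually_ne hd₁] with z hz
  show fold a z - fold a z₁ = _
  rw [fold_eq_of_mul_eq ha hz₁, pow_one, smul_eq_mul, fold, mul_div_assoc',
    ← mul_sub_mul_den_eq hσ z]
  field_simp

theorem sub_critPt_sq_of_mul_eq (ha : ‖a‖ < 1) (hz : z * (z - a) = w * den a z) :
    (z - critPt a) ^ 2 = (w - critVal a) * den a z := by
  rw [← mul_sub_critVal_mul_den ha, hz]
  ring

theorem norm_den_le (ha : ‖a‖ ≤ 1) (hz : z ∈ closedBall a 1) : ‖den a z‖ ≤ 2 := by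
  rw [mem_closedBall_iff_norm] at hz
  calc ‖den a z‖ ≤ ‖(1 : ℂ)‖ + ‖conj a * (z - a)‖ := norm_add_le _ _
    _ ≤ 2 := by
      rw [norm_one, norm_mul, RCLike.norm_conj]
      nlinarith [norm_nonneg a, norm_nonneg (z - a)]

theorem tendsto_critPt (ha : ‖a‖ < 1) {r : ℂ → ℂ}
    (hr : ∀ w ∈ closedBall (0 : ℂ) 1, r w * (r w - a) = w * den a (r w)) :
    Tendsto r (𝓝[closedBall 0 1] (critVal a)) (𝓝[closedBall a 1] (critPt a)) := by
  have hmem : ∀ w ∈ closedBall (0 : ℂ) 1, r w ∈ closedBall a 1 := fun w hw ↦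
    mem_closedBall_of_mul_eq ha (hr w hw) (mem_closedBall_zero_iff.mp hw)
  refine tendsto_nhdsWithin_iff.mpr ⟨?_, eventually_nhdsWithin_of_forall hmem⟩
  rw [tendsto_iff_norm_sub_tendsto_zero]
  have hbound : ∀ w ∈ closedBall (0 : ℂ) 1, ‖r w - critPt a‖ ≤ √(2 * ‖w - critVal a‖) := by
    intro w hw
    apply Real.le_sqrt_of_sq_le
    rw [← norm_pow, sub_critPt_sq_of_mul_eq ha (hr w hw), norm_mul]
    nlinarith [norm_den_le ha.le (hmem w hw), norm_nonneg (w - critVal a)]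
  refine squeeze_zero' (Eventually.of_forall fun _ ↦ norm_nonneg _)
    (eventually_nhdsWithin_of_forall hbound) ?_
  have : Tendsto (fun w ↦ √(2 * ‖w - critVal a‖)) (𝓝 (critVal a)) (𝓝 0) := by
    have hc : Continuous (fun w ↦ √(2 * ‖w - critVal a‖)) := by fun_prop
    simpa using hc.tendsto (critVal a)
  exact this.mono_left nhdsWithin_le_nhds

theorem differentiable_disc (a : ℂ) : Differentiable ℂ (disc a) := by
  unfold disc
  fun_prop

section Regularity

variable {M : ℂ → ℂ} {w₀ : ℂ}

theorem continuousWithinAt_comp_branch (ha : ‖a‖ < 1) (hM : ContinuousOn M (closedBall a 1))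
    {σ : ℂ → ℂ} (hσ : ContinuousAt σ w₀) (hσsq : ∀ w, σ w ^ 2 = disc a w)
    (hw₀ : w₀ ∈ closedBall 0 1) :
    ContinuousWithinAt (fun w ↦ M (branch a w (σ w))) (closedBall 0 1) w₀ := by
  have hmaps : MapsTo (fun w ↦ branch a w (σ w)) (closedBall 0 1) (closedBall a 1) :=
    fun w hw ↦ mem_closedBall_of_mul_eq ha (branch_mul_eq (hσsq w)) (mem_closedBall_zero_iff.mp hw)
  have hb : ContinuousAt (fun w ↦ branch a w (σ w)) w₀ := by
    unfold branch
    fun_prop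
  exact (hM _ (hmaps hw₀)).comp (f := fun w ↦ branch a w (σ w)) hb.continuousWithinAt hmaps

theorem differentiableAt_comp_branch (ha : ‖a‖ < 1) (hM : DifferentiableOn ℂ M (ball a 1))
    {σ : ℂ → ℂ} (hσ : DifferentiableAt ℂ σ w₀) (hσsq : ∀ w, σ w ^ 2 = disc a w)
    (hw₀ : w₀ ∈ ball 0 1) : DifferentiableAt ℂ (fun w ↦ M (branch a w (σ w))) w₀ := by
  have hmem : branch a w₀ (σ w₀) ∈ ball a 1 :=
    mem_ball_of_mul_eq ha (branch_mul_eq (hσsq w₀)) (mem_ball_zero_iff.mp hw₀)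
  have hb : DifferentiableAt ℂ (fun w ↦ branch a w (σ w)) w₀ := by
    unfold branch
    fun_prop
  exact (hM.differentiableAt (isOpen_ball.mem_nhds hmem)).comp w₀ hb

theorem continuousOn_trace (ha : ‖a‖ < 1) (hM : ContinuousOn M (closedBall a 1)) :
    ContinuousOn (trace a M) (closedBall 0 1) := by
  intro w₀ hw₀
  by_cases hD : disc a w₀ = 0
  · obtain rfl := eq_critVal_of_disc_eq_zero ha (mem_closedBall_zero_iff.mp hw₀) hD
    have hcrit := (hM _ (ball_subset_closedBall (critPt_mem_ball ha))).tendsto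
    have h₁ := hcrit.comp <| tendsto_critPt ha fun w _ ↦
      branch_mul_eq (cpow_ofNat_inv_pow (disc a w) 2)
    have h₂ := hcrit.comp <| tendsto_critPt ha fun w _ ↦
      branch_mul_eq (by rw [neg_sq]; exact cpow_ofNat_inv_pow (disc a w) 2)
    rw [ContinuousWithinAt, trace_critVal ha, ← add_self_div_two (M (critPt a))]
    exact (h₁.add h₂).div_const 2
  · obtain ⟨σ, hσ, hσsq⟩ := exists_differentiableAt_sq_eq (differentiable_disc a w₀) hD
    rw [trace_eq_of_forall_sq_eq hσsq]
    have hσsq' : ∀ w, (-σ w) ^ 2 = disc a w := by simpa [neg_sq]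
    exact ((continuousWithinAt_comp_branch ha hM hσ.continuousAt hσsq hw₀).add
      (continuousWithinAt_comp_branch ha hM hσ.continuousAt.neg hσsq' hw₀)).div_const 2

theorem differentiableAt_trace (ha : ‖a‖ < 1) (hM : DifferentiableOn ℂ M (ball a 1))
    (hw₀ : w₀ ∈ ball 0 1) (hD : disc a w₀ ≠ 0) : DifferentiableAt ℂ (trace a M) w₀ := by
  obtain ⟨σ, hσ, hσsq⟩ := exists_differentiableAt_sq_eq (differentiable_disc a w₀) hD
  rw [trace_eq_of_forall_sq_eq hσsq]
  exact ((differentiableAt_comp_branch ha hM hσ hσsq hw₀).add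
    (differentiableAt_comp_branch ha hM hσ.neg (by simpa [neg_sq]) hw₀)).div_const 2

theorem differentiableOn_trace (ha : ‖a‖ < 1) (hMc : ContinuousOn M (closedBall a 1))
    (hMd : DifferentiableOn ℂ M (ball a 1)) : DifferentiableOn ℂ (trace a M) (ball 0 1) := by
  have hoff : ∀ w ∈ ball (0 : ℂ) 1, w ≠ critVal a → DifferentiableAt ℂ (trace a M) w :=
    fun w hw hne ↦ differentiableAt_trace ha hMd hw fun hD ↦
      hne (eq_critVal_of_disc_eq_zero ha (mem_ball_zero_iff.mp hw).le hD)
  intro w hw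
  rcases eq_or_ne w (critVal a) with rfl | hne
  · refine (analyticAt_of_differentiable_on_punctured_nhds_of_continuousAt ?_ ?_)
      |>.differentiableAt.differentiableWithinAt
    · filter_upwards [nhdsWithin_le_nhds (isOpen_ball.mem_nhds hw), self_mem_nhdsWithin]
        with w hw' hne using hoff w hw' hne
    · exact (continuousOn_trace ha hMc).continuousAt
        (mem_of_superset (isOpen_ball.mem_nhds hw) ball_subset_closedBall)
  · exact (hoff w hw hne).differentiableWithinAt

end Regularity

theorem ne_zero_of_mem_sphere (ha : ‖a‖ < 1) (hz : z ∈ sphere a 1) : z ≠ 0 := by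
  rintro rfl
  rw [mem_sphere_iff_norm, zero_sub, norm_neg] at hz
  exact ha.ne hz

theorem den_of_mem_sphere (hz : z ∈ sphere a 1) : den a z = (z - a) * conj z := by
  have h : (z - a) * conj (z - a) = 1 := by
    rw [mul_conj', mem_sphere_iff_norm.mp hz]
    simp
  rw [den]
  rw [map_sub] at h
  linear_combination -h

theorem fold_of_mem_sphere (ha : ‖a‖ < 1) (hz : z ∈ sphere a 1) : fold a z = (z / ‖z‖) ^ 2 := by
  have hz₀ : z ≠ 0 := ne_zero_of_mem_sphere ha hz
  have hza : z - a ≠ 0 := by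
    rw [← norm_ne_zero_iff, mem_sphere_iff_norm.mp hz]
    exact one_ne_zero
  have hzc : conj z ≠ 0 := (map_ne_zero _).mpr hz₀
  rw [fold, den_of_mem_sphere hz, div_pow, ← mul_conj']
  field_simp

theorem deck_of_mem_sphere (ha : ‖a‖ < 1) (hz : z ∈ sphere a 1) :
    deck a z = ((‖a‖ ^ 2 - 1) / ‖z‖ ^ 2 : ℝ) * z := by
  have hz₀ : z ≠ 0 := ne_zero_of_mem_sphere ha hz
  have hza : z - a ≠ 0 := by
    rw [← norm_ne_zero_iff, mem_sphere_iff_norm.mp hz]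
    exact one_ne_zero
  have hzc : conj z ≠ 0 := (map_ne_zero _).mpr hz₀
  push_cast
  rw [deck, den_of_mem_sphere hz, ← conj_mul' a, ← mul_conj' z]
  field_simp

theorem deck_mem_sphere (ha : ‖a‖ < 1) (hz : z ∈ sphere a 1) : deck a z ∈ sphere a 1 := by
  have hd := den_ne_zero ha (mem_sphere_iff_norm.mp hz).le
  have hfold : ‖fold a (deck a z)‖ = 1 := by
    rw [fold_deck ha hd, fold_of_mem_sphere ha hz, norm_pow,
      norm_div_norm (ne_zero_of_mem_sphere ha hz), one_pow]
  have hdeck := deck_mem_closedBall ha (sphere_subset_closedBall hz)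
  have hd' := den_ne_zero ha (mem_closedBall_iff_norm.mp hdeck)
  rw [mem_sphere_iff_norm]
  refine le_antisymm (mem_closedBall_iff_norm.mp hdeck) (not_lt.mp fun hlt ↦ ?_)
  exact hfold.not_lt ((norm_fold_lt_one_iff ha hd').mpr hlt)

theorem exists_mem_sphere_div_norm_eq {u : ℂ} (ha : ‖a‖ < 1) (hu : ‖u‖ = 1) :
    ∃ z ∈ sphere a 1, z / ‖z‖ = u ∧ fold a z = u ^ 2 := by
  obtain ⟨t, ht, hmem⟩ := exists_pos_smul_mem_sphere ha (norm_ne_zero_iff.mp (hu ▸ one_ne_zero))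
  have hdir : t • u / ‖t • u‖ = u := by
    have ht' : (t : ℂ) ≠ 0 := ofReal_ne_zero.mpr ht.ne'
    rw [norm_smul, hu, Real.norm_of_nonneg ht.le, mul_one, real_smul]
    field_simp
  exact ⟨t • u, hmem, hdir, by rw [fold_of_mem_sphere ha hmem, hdir]⟩

variable {G f : ℂ → ℂ}

theorem apply_of_mem_sphere (ha : ‖a‖ < 1) (hf : RayInvariant f)
    (hG : ∀ z ∈ sphere a 1, G z = f z) (hz : z ∈ sphere a 1) :
    G z = f (z / ‖z‖) ∧ G (deck a z) = f (-(z / ‖z‖)) := by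
  have hz₀ := ne_zero_of_mem_sphere ha hz
  refine ⟨by rw [hG z hz, hf.apply_div_norm hz₀], ?_⟩
  have hneg : (0 : ℝ) < -((‖a‖ ^ 2 - 1) / ‖z‖ ^ 2) :=
    neg_pos.mpr (div_neg_of_neg_of_pos (by nlinarith [norm_nonneg a]) (by positivity))
  have hmul : (((‖a‖ ^ 2 - 1) / ‖z‖ ^ 2 : ℝ) : ℂ) * z =
      ((-((‖a‖ ^ 2 - 1) / ‖z‖ ^ 2) : ℝ) : ℂ) * -z := by
    push_cast
    ring
  rw [hG _ (deck_mem_sphere ha hz), deck_of_mem_sphere ha hz, hmul,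
    hf _ (neg_ne_zero.mpr hz₀) _ hneg, ← hf.apply_div_norm (neg_ne_zero.mpr hz₀), norm_neg,
    neg_div]

theorem trace_sq (ha : ‖a‖ < 1) (hf : RayInvariant f) (hG : ∀ z ∈ sphere a 1, G z = f z)
    {u : ℂ} (hu : ‖u‖ = 1) : trace a G (u ^ 2) = (f u + f (-u)) / 2 := by
  obtain ⟨z, hz, hzu, hfold⟩ := exists_mem_sphere_div_norm_eq ha hu
  obtain ⟨h₁, h₂⟩ := apply_of_mem_sphere ha hf hG hz
  rw [← hfold, trace_fold (den_ne_zero ha (mem_sphere_iff_norm.mp hz).le), h₁, h₂, hzu]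

def oddPart (a : ℂ) (G : ℂ → ℂ) (z : ℂ) : ℂ := (G z - G (deck a z)) / 2

theorem oddPart_deck (ha : ‖a‖ < 1) (hz : z ∈ closedBall a 1) :
    oddPart a G (deck a z) = -oddPart a G z := by
  rw [oddPart, oddPart, deck_deck ha hz]
  ring

theorem continuousOn_oddPart (ha : ‖a‖ < 1) (hG : ContinuousOn G (closedBall a 1)) :
    ContinuousOn (oddPart a G) (closedBall a 1) :=
  (hG.sub (hG.comp (continuousOn_deck ha) fun _ ↦ deck_mem_closedBall ha)).div_const 2

theorem differentiableOn_oddPart (ha : ‖a‖ < 1) (hG : DifferentiableOn ℂ G (ball a 1)) :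
    DifferentiableOn ℂ (oddPart a G) (ball a 1) :=
  (hG.sub (hG.comp (differentiableOn_deck ha) fun _ ↦ deck_mem_ball ha)).div_const 2

theorem trace_sq_oddPart_fold (ha : ‖a‖ < 1) (hz : z ∈ closedBall a 1) :
    trace a (oddPart a G ^ 2) (fold a z) = oddPart a G z ^ 2 := by
  rw [trace_fold (den_ne_zero ha (mem_closedBall_iff_norm.mp hz)), Pi.pow_apply, Pi.pow_apply,
    oddPart_deck ha hz]
  ring

theorem trace_sq_oddPart_sq (ha : ‖a‖ < 1) (hf : RayInvariant f)
    (hG : ∀ z ∈ sphere a 1, G z = f z) {u : ℂ} (hu : ‖u‖ = 1) :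
    trace a (oddPart a G ^ 2) (u ^ 2) = ((f u - f (-u)) / 2) ^ 2 := by
  obtain ⟨z, hz, hzu, hfold⟩ := exists_mem_sphere_div_norm_eq ha hu
  obtain ⟨h₁, h₂⟩ := apply_of_mem_sphere ha hf hG hz
  rw [← hfold, trace_sq_oddPart_fold ha (sphere_subset_closedBall hz), oddPart, h₁, h₂, hzu]

theorem eqOn_zero_of_comp_fold_eq_sq {b : ℂ} {X Ha Hb : ℂ → ℂ} (ha : ‖a‖ < 1) (hb : ‖b‖ < 1)
    (hba : b ≠ a) (hba' : b ≠ -a) (hX : DifferentiableOn ℂ X (ball 0 1))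
    (hHa : DifferentiableOn ℂ Ha (ball a 1)) (hHb : DifferentiableOn ℂ Hb (ball b 1))
    (hodd : ∀ z ∈ ball a 1, Ha (deck a z) = -Ha z)
    (hXa : ∀ z ∈ ball a 1, X (fold a z) = Ha z ^ 2)
    (hXb : ∀ z ∈ ball b 1, X (fold b z) = Hb z ^ 2) : EqOn X 0 (ball 0 1) := by
  have hXan := hX.analyticOnNhd isOpen_ball
  have hXcrit := hXan _ (critVal_mem_ball ha)
  by_contra hne
  obtain ⟨m, hm⟩ := ENat.ne_top_iff_exists.mp fun htop ↦ hne <|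
    hXan.eqOn_zero_of_preconnected_of_eventuallyEq_zero (convex_ball 0 1).isPreconnected
      (critVal_mem_ball ha) (analyticOrderAt_eq_top.mp htop)
  have finite : ∀ {x : ℕ∞} {n : ℕ}, 2 * x = n → ∃ k : ℕ, (k : ℕ∞) = x := fun h ↦
    ENat.ne_top_iff_exists.mp (by rintro rfl; simp at h)
  -- at the critical point of `fold a`, the order of `Ha` is `m`, and it is odd
  have hcrit := critPt_mem_ball ha
  have hord_a := two_mul_analyticOrderAt_eq_of_comp_eq_sq
    (hHa.analyticAt (isOpen_ball.mem_nhds hcrit)) (fold_critPt ha ▸ hXcrit)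
    (analyticAt_fold ha hcrit) (eventually_of_mem (isOpen_ball.mem_nhds hcrit) hXa)
  rw [analyticOrderAt_fold_sub_critVal ha, fold_critPt ha, ← hm] at hord_a
  obtain ⟨k, hk⟩ := finite hord_a
  rw [← hk] at hord_a
  have hodd_k : Odd k := odd_of_analyticOrderAt_eq_of_comp_eq_neg
    (hHa.analyticAt (isOpen_ball.mem_nhds hcrit)) hk.symm (hasDerivAt_deck_critPt ha)
    (deck_critPt ha) (eventually_of_mem (isOpen_ball.mem_nhds hcrit) hodd)
  -- `critVal a` is a regular value of `fold b`, so `m` is twice the order of `Hb` there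
  obtain ⟨z₁, hz₁, hfold₁, hord₁⟩ := exists_fold_eq_analyticOrderAt_eq_one hb
    (critVal_mem_ball ha) fun h ↦ by rcases critVal_inj ha hb h with h | h <;> contradiction
  have hord_b := two_mul_analyticOrderAt_eq_of_comp_eq_sq
    (hHb.analyticAt (isOpen_ball.mem_nhds hz₁)) (hfold₁ ▸ hXcrit)
    (analyticAt_fold hb hz₁) (eventually_of_mem (isOpen_ball.mem_nhds hz₁) hXb)
  rw [hord₁, hfold₁, ← hm, mul_one] at hord_b
  obtain ⟨k', hk'⟩ := finite hord_b
  rw [← hk'] at hord_b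
  norm_cast at hord_a hord_b
  obtain ⟨j, rfl⟩ := hodd_k
  omega

theorem apply_neg_eq_of_extHol {b u : ℂ} (ha : ‖a‖ < 1) (hb : ‖b‖ < 1) (hba : b ≠ a)
    (hba' : b ≠ -a) (hf : RayInvariant f) (hexta : ExtHol f a 1) (hextb : ExtHol f b 1)
    (hu : ‖u‖ = 1) : f (-u) = f u := by
  obtain ⟨Ga, hGac, hGad, hGab⟩ := hexta
  obtain ⟨Gb, hGbc, hGbd, hGbb⟩ := hextb
  have hXac := continuousOn_trace ha ((continuousOn_oddPart ha hGac).pow 2)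
  have hXad := differentiableOn_trace ha ((continuousOn_oddPart ha hGac).pow 2)
    ((differentiableOn_oddPart ha hGad).pow 2)
  have hXbc := continuousOn_trace hb ((continuousOn_oddPart hb hGbc).pow 2)
  have hXbd := differentiableOn_trace hb ((continuousOn_oddPart hb hGbc).pow 2)
    ((differentiableOn_oddPart hb hGbd).pow 2)
  have hsphere : EqOn (trace a (oddPart a Ga ^ 2)) (trace b (oddPart b Gb ^ 2)) (sphere 0 1) := by
    intro w hw
    obtain ⟨v, rfl⟩ := IsAlgClosed.exists_pow_nat_eq w two_pos
    have hv : ‖v‖ = 1 := by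
      rw [mem_sphere_zero_iff_norm, norm_pow] at hw
      exact (pow_eq_one_iff_of_nonneg (norm_nonneg v) two_ne_zero).mp hw
    rw [trace_sq_oddPart_sq ha hf hGab hv, trace_sq_oddPart_sq hb hf hGbb hv]
  have hab : EqOn (trace a (oddPart a Ga ^ 2)) (trace b (oddPart b Gb ^ 2)) (closedBall 0 1) := by
    rw [← closure_ball _ one_ne_zero] at hXac hXbc ⊢
    exact eqOn_closure_of_eqOn_frontier isBounded_ball ⟨hXad, hXac⟩ ⟨hXbd, hXbc⟩
      (by rwa [frontier_ball _ one_ne_zero])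
  have hzero := eqOn_zero_of_comp_fold_eq_sq ha hb hba hba' hXad (differentiableOn_oddPart ha hGad)
    (differentiableOn_oddPart hb hGbd) (fun z hz ↦ oddPart_deck ha (ball_subset_closedBall hz))
    (fun z hz ↦ trace_sq_oddPart_fold ha (ball_subset_closedBall hz)) fun z hz ↦ by
      rw [hab (fold_mem_closedBall hb (ball_subset_closedBall hz))]
      exact trace_sq_oddPart_fold hb (ball_subset_closedBall hz)
  have h := hzero.of_subset_closure hXac continuousOn_const ball_subset_closedBall
    (closure_ball _ one_ne_zero).ge (show u ^ 2 ∈ closedBall (0 : ℂ) 1 by simp [hu])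
  rw [trace_sq_oddPart_sq ha hf hGab hu, Pi.zero_apply] at h
  linear_combination -2 * (pow_eq_zero_iff two_ne_zero).mp h

theorem exists_eq_comp_sq_div_norm (ha : ‖a‖ < 1) (hf : RayInvariant f) (hext : ExtHol f a 1)
    (heven : ∀ u : ℂ, ‖u‖ = 1 → f (-u) = f u) :
    ∃ Y : ℂ → ℂ, ContinuousOn Y (closedBall 0 1) ∧ DifferentiableOn ℂ Y (ball 0 1) ∧
      ∀ z : ℂ, z ≠ 0 → f z = Y ((z / ‖z‖) ^ 2) := by
  obtain ⟨G, hGc, hGd, hGb⟩ := hext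
  refine ⟨trace a G, continuousOn_trace ha hGc, differentiableOn_trace ha hGc hGd, fun z hz ↦ ?_⟩
  rw [trace_sq ha hf hGb (norm_div_norm hz), heven _ (norm_div_norm hz), add_self_div_two,
    hf.apply_div_norm hz]

theorem extHol_of_eq_comp_sq_div_norm {Y : ℂ → ℂ} (hYc : ContinuousOn Y (closedBall 0 1))
    (hYd : DifferentiableOn ℂ Y (ball 0 1)) (hfY : ∀ z : ℂ, z ≠ 0 → f z = Y ((z / ‖z‖) ^ 2))
    {c : ℂ} {ρ : ℝ} (hρ : 0 < ρ) (hc : ‖c‖ < ρ) : ExtHol f c ρ := by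
  have hnorm : ∀ z : ℂ, ‖z / ρ‖ = ‖z‖ / ρ := fun z ↦ by
    rw [norm_div, norm_real, Real.norm_of_nonneg hρ.le]
  have ha : ‖c / ρ‖ < 1 := by rwa [hnorm, div_lt_one hρ]
  have hcb : MapsTo (· / (ρ : ℂ)) (closedBall c ρ) (closedBall (c / ρ) 1) := fun z hz ↦ by
    rwa [mem_closedBall_iff_norm, ← sub_div, hnorm, div_le_one hρ, ← mem_closedBall_iff_norm]
  have hb : MapsTo (· / (ρ : ℂ)) (ball c ρ) (ball (c / ρ) 1) := fun z hz ↦ by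
    rwa [mem_ball_iff_norm, ← sub_div, hnorm, div_lt_one hρ, ← mem_ball_iff_norm]
  refine ⟨fun z ↦ Y (fold (c / ρ) (z / ρ)), ?_, ?_, fun z hz ↦ ?_⟩
  · exact hYc.comp ((continuousOn_fold ha).comp (continuous_id.div_const _).continuousOn hcb)
      fun z hz ↦ fold_mem_closedBall ha (hcb hz)
  · exact hYd.comp ((differentiableOn_fold ha).comp (differentiableOn_id.div_const _) hb)
      fun z hz ↦ fold_mem_ball ha (hb hz)
  · have hz' : z / ρ ∈ sphere (c / ρ) 1 := by
      rw [mem_sphere_iff_norm, ← sub_div, hnorm, mem_sphere_iff_norm.mp hz, div_self hρ.ne']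
    have hz₀ : z ≠ 0 := by
      rintro rfl
      rw [mem_sphere_iff_norm, zero_sub, norm_neg] at hz
      exact hc.ne hz
    have hρ' : (ρ : ℂ) ≠ 0 := ofReal_ne_zero.mpr hρ.ne'
    show Y (fold (c / ρ) (z / ρ)) = f z
    rw [fold_of_mem_sphere ha hz', hfY z hz₀, hnorm, ofReal_div]
    field_simp

end DiscFold

end

open DiscFold

theorem stmt17_general (f : ℂ → ℂ)
    (hray : ∀ z : ℂ, z ≠ 0 → ∀ t : ℝ, 0 < t → f ((t : ℂ) * z) = f z)
    (a b : ℂ) (ha : ‖a‖ < 1) (hb : ‖b‖ < 1)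
    (hba : b ≠ a) (hba' : b ≠ -a)
    (hexta : ExtHol f a 1) (hextb : ExtHol f b 1) :
    (∃ g : ℂ → ℂ, ContinuousOn g (closedBall 0 1) ∧
      DifferentiableOn ℂ g (ball 0 1) ∧
      ∀ z : ℂ, z ≠ 0 → f z = g (z / (‖z‖ : ℂ))) ∧
    (∀ z : ℂ, z ≠ 0 → ∀ t : ℝ, t ≠ 0 → f ((t : ℂ) * z) = f z) ∧
    (∀ (c : ℂ) (ρ : ℝ), 0 < ρ → ‖c‖ < ρ → ExtHol f c ρ) := by
  obtain ⟨Y, hYc, hYd, hfY⟩ := exists_eq_comp_sq_div_norm ha hray hexta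
    fun u hu ↦ apply_neg_eq_of_extHol ha hb hba hba' hray hexta hextb hu
  refine ⟨⟨fun ζ ↦ Y (ζ ^ 2), ?_, ?_, hfY⟩, fun z hz t ht ↦ ?_,
    fun c ρ hρ hc ↦ extHol_of_eq_comp_sq_div_norm hYc hYd hfY hρ hc⟩
  · refine hYc.comp (continuous_pow 2).continuousOn fun ζ hζ ↦ ?_
    rw [mem_closedBall_zero_iff] at hζ ⊢
    rw [norm_pow]
    exact pow_le_one₀ (norm_nonneg ζ) hζ
  · refine hYd.comp (differentiable_pow 2).differentiableOn fun ζ hζ ↦ ?_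
    rw [mem_ball_zero_iff] at hζ ⊢
    rw [norm_pow]
    exact pow_lt_one₀ (norm_nonneg ζ) hζ two_ne_zero
  · rw [hfY z hz, hfY _ (mul_ne_zero (ofReal_ne_zero.mpr ht) hz), div_norm_sq_ofReal_mul ht]

theorem stmt17 (f : ℂ → ℂ) (hf : ContinuousOn f {(0 : ℂ)}ᶜ)
    (hray : ∀ z : ℂ, z ≠ 0 → ∀ t : ℝ, 0 < t → f ((t : ℂ) * z) = f z)
    (a b : ℂ) (ha : ‖a‖ < 1) (hb : ‖b‖ < 1)
    (hba : b ≠ a) (hba' : b ≠ -a)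
    (hexta : ExtHol f a 1) (hextb : ExtHol f b 1) :
    (∃ g : ℂ → ℂ, ContinuousOn g (closedBall 0 1) ∧
      DifferentiableOn ℂ g (ball 0 1) ∧
      ∀ z : ℂ, z ≠ 0 → f z = g (z / (‖z‖ : ℂ))) ∧
    (∀ z : ℂ, z ≠ 0 → ∀ t : ℝ, t ≠ 0 → f ((t : ℂ) * z) = f z) ∧
    (∀ (c : ℂ) (ρ : ℝ), 0 < ρ → ‖c‖ < ρ → ExtHol f c ρ) :=
  stmt17_general f hray a b ha hb hba hba' hexta hextb
end
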